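/- arXiv:1307.5642 — 3 statements merged into one kernel-verified Lean document; each statement's English description precedes it below -/
import Mathlib

section
/- Let n ≥ 1, λ ≥ 0 and 1 < p < ∞. There is a constant c = c(n,p,λ) such that for every weight w ∈ A_p, every t > 0 and every nonnegative measurable f, one has w({x ∈ ℝ^n : M_{Φ_λ}f(x) > t}) ≤ c [w]_{A_p} ∫_{ℝ^n} Φ_λ(f(x)/t)^p w(x) dx, where w(E) = ∫_E w dx. -/
open MeasureTheory Filter
open scoped ENNReal NNReal

/-- A (closed) cube in ℝⁿ with sides parallel to the coordinate axes. -/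
def IsCube (n : ℕ) (Q : Set (Fin n → ℝ)) : Prop :=
  ∃ (a : Fin n → ℝ) (h : ℝ), 0 < h ∧ Q = {y | ∀ i, y i ∈ Set.Icc (a i) (a i + h)}

/-- Average of an `ℝ≥0∞`-valued function over a set. -/
noncomputable def setAvg (n : ℕ) (Q : Set (Fin n → ℝ)) (g : (Fin n → ℝ) → ℝ≥0∞) : ℝ≥0∞ :=
  (volume Q)⁻¹ * ∫⁻ y in Q, g y

/-- The Muckenhoupt `A_p` constant of a weight `w`. -/
noncomputable def ApConst (n : ℕ) (p : ℝ) (w : (Fin n → ℝ) → ℝ≥0∞) : ℝ≥0∞ :=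
  ⨆ (Q : Set (Fin n → ℝ)) (_ : IsCube n Q),
    setAvg n Q w * (setAvg n Q fun y => w y ^ (1 - p / (p - 1))) ^ (p - 1)

/-- A weight: a measurable nonnegative (`ℝ≥0∞`-valued) locally integrable function. -/
def IsWeight (n : ℕ) (w : (Fin n → ℝ) → ℝ≥0∞) : Prop :=
  Measurable w ∧ ∀ Q : Set (Fin n → ℝ), IsCube n Q → (∫⁻ y in Q, w y) < ∞

/-- Weighted L^p norm of an `ℝ≥0∞`-valued function. -/
noncomputable def wLpNormE (n : ℕ) (p : ℝ) (w : (Fin n → ℝ) → ℝ≥0∞)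
    (g : (Fin n → ℝ) → ℝ≥0∞) : ℝ≥0∞ :=
  (∫⁻ x, g x ^ p * w x) ^ (1 / p)

/-- Weighted L^p norm of a real function. -/
noncomputable def wLpNorm (n : ℕ) (p : ℝ) (w : (Fin n → ℝ) → ℝ≥0∞)
    (f : (Fin n → ℝ) → ℝ) : ℝ≥0∞ :=
  wLpNormE n p w fun x => (‖f x‖₊ : ℝ≥0∞)

/-- Unweighted L^p norm of a real function on ℝⁿ. -/
noncomputable def lpNorm (n : ℕ) (p : ℝ) (f : (Fin n → ℝ) → ℝ) : ℝ≥0∞ :=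
  (∫⁻ x, (‖f x‖₊ : ℝ≥0∞) ^ p) ^ (1 / p)

/-- Unweighted L^p norm of an `ℝ≥0∞`-valued function on ℝⁿ. -/
noncomputable def lpNormE (n : ℕ) (p : ℝ) (g : (Fin n → ℝ) → ℝ≥0∞) : ℝ≥0∞ :=
  (∫⁻ x, g x ^ p) ^ (1 / p)

/-- Operator norm on unweighted `L^p(ℝⁿ)`: the least `C ∈ [0,∞]` with
`‖Tf‖_p ≤ C ‖f‖_p` for all `f ∈ L^p`. -/
noncomputable def opNorm (n : ℕ) (p : ℝ)
    (T : ((Fin n → ℝ) → ℝ) → (Fin n → ℝ) → ℝ) : ℝ≥0∞ :=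
  sInf {C : ℝ≥0∞ | ∀ f : (Fin n → ℝ) → ℝ, Measurable f → lpNorm n p f < ∞ →
    lpNorm n p (T f) ≤ C * lpNorm n p f}

/-- The Hardy–Littlewood maximal operator (over cubes with sides parallel to the axes). -/
noncomputable def HLM (n : ℕ) (g : (Fin n → ℝ) → ℝ≥0∞) : (Fin n → ℝ) → ℝ≥0∞ :=
  fun x => ⨆ (Q : Set (Fin n → ℝ)) (_ : IsCube n Q) (_ : x ∈ Q), setAvg n Q g

/-- The operator norm of the Hardy–Littlewood maximal operator on `L^p(ℝⁿ)`. -/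
noncomputable def maximalOpNorm (n : ℕ) (p : ℝ) : ℝ≥0∞ :=
  sInf {C : ℝ≥0∞ | ∀ f : (Fin n → ℝ) → ℝ, Measurable f → lpNorm n p f < ∞ →
    lpNormE n p (HLM n fun y => (‖f y‖₊ : ℝ≥0∞)) ≤ C * lpNorm n p f}

/-- The Young function `Φ_λ(t) = t (log(e+t))^λ`. -/
noncomputable def PhiLam (lam t : ℝ) : ℝ := t * Real.log (Real.exp 1 + t) ^ lam

/-- Localized Luxemburg norm `‖f‖_{Φ_λ,Q}` over a cube `Q`. -/
noncomputable def luxNorm (n : ℕ) (lam : ℝ) (Q : Set (Fin n → ℝ))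
    (f : (Fin n → ℝ) → ℝ) : ℝ≥0∞ :=
  ⨅ (t : ℝ) (_ : 0 < t)
    (_ : (volume Q)⁻¹ * ∫⁻ y in Q, ENNReal.ofReal (PhiLam lam (|f y| / t)) ≤ 1),
    ENNReal.ofReal t

/-- The Orlicz maximal operator `M_{Φ_λ} f(x) = sup_{Q ∋ x} ‖f‖_{Φ_λ,Q}`. -/
noncomputable def orliczMax (n : ℕ) (lam : ℝ) (f : (Fin n → ℝ) → ℝ) :
    (Fin n → ℝ) → ℝ≥0∞ :=
  fun x => ⨆ (Q : Set (Fin n → ℝ)) (_ : IsCube n Q) (_ : x ∈ Q), luxNorm n lam Q f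

/-!
If `M_{Φ_λ} f(x) > t`, some cube `Q ∋ x` has `|Q| < ∫_Q Φ_λ(f/t)`; since `Fin n → ℝ` carries the
sup metric, cubes are closed balls, and the ball of twice the radius centred at `x` satisfies
`|B| < 2ⁿ ∫_B Φ_λ(f/t)`. On such a ball, Hölder's inequality against `w^{1/p} · w^{-1/p}` and the
`A_p` condition give `w(B) ≤ 2^{np} [w]_{A_p} ∫_B Φ_λ(f/t)^p w`. The Besicovitch covering theorem
splits a cover of the level set by these balls into boundedly many disjoint subfamilies, so
summing the local estimates needs no doubling property of `w`.
-/

open Metric Set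

theorem closedBall_eq_setOf_forall_mem_Icc {ι : Type*} [Fintype ι] (c : ι → ℝ) {r : ℝ}
    (hr : 0 ≤ r) :
    closedBall c r = {y | ∀ i, y i ∈ Icc (c i - r) (c i + r)} := by
  ext y
  simp only [closedBall_pi c hr, Real.closedBall_eq_Icc, mem_univ_pi, mem_ofPred_eq]

theorem isCube_iff_exists_closedBall {n : ℕ} {Q : Set (Fin n → ℝ)} :
    IsCube n Q ↔ ∃ c r, 0 < r ∧ Q = closedBall c r := by
  constructor
  · rintro ⟨a, h, hh, rfl⟩
    refine ⟨a + fun _ => h / 2, h / 2, half_pos hh, ?_⟩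
    rw [closedBall_eq_setOf_forall_mem_Icc _ (half_pos hh).le]
    ext y
    simp only [mem_ofPred_eq, Pi.add_apply, add_sub_cancel_right, add_assoc, add_halves]
  · rintro ⟨c, r, hr, rfl⟩
    refine ⟨c - fun _ => r, 2 * r, by positivity, ?_⟩
    rw [closedBall_eq_setOf_forall_mem_Icc _ hr.le]
    ext y
    simp only [mem_ofPred_eq, Pi.sub_apply, show ∀ i, c i - r + 2 * r = c i + r by intro; ring]

theorem volume_closedBall_two_mul {n : ℕ} (x : Fin n → ℝ) {r : ℝ} (hr : 0 ≤ r) (c : Fin n → ℝ) :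
    volume (closedBall x (2 * r)) = 2 ^ n * volume (closedBall c r) := by
  rw [Real.volume_pi_closedBall _ (by positivity), Real.volume_pi_closedBall _ hr,
    Fintype.card_fin, ← ENNReal.ofReal_ofNat, ← ENNReal.ofReal_pow zero_le_two,
    ← ENNReal.ofReal_mul (by positivity), mul_pow]

theorem IsCube.volume_ne_zero {n : ℕ} {Q : Set (Fin n → ℝ)} (hQ : IsCube n Q) : volume Q ≠ 0 := by
  obtain ⟨c, r, hr, rfl⟩ := isCube_iff_exists_closedBall.1 hQ
  exact (measure_closedBall_pos _ _ hr).ne'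

theorem IsCube.volume_ne_top {n : ℕ} {Q : Set (Fin n → ℝ)} (hQ : IsCube n Q) : volume Q ≠ ⊤ := by
  obtain ⟨c, r, hr, rfl⟩ := isCube_iff_exists_closedBall.1 hQ
  exact measure_closedBall_lt_top.ne

theorem luxNorm_le_of_setLIntegral_le {n : ℕ} {lam t : ℝ} {Q : Set (Fin n → ℝ)}
    {f : (Fin n → ℝ) → ℝ} (hQ : IsCube n Q) (ht : 0 < t)
    (h : ∫⁻ y in Q, ENNReal.ofReal (PhiLam lam (|f y| / t)) ≤ volume Q) :
    luxNorm n lam Q f ≤ ENNReal.ofReal t := by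
  refine iInf₂_le_of_le t ht (iInf_le_of_le ?_ le_rfl)
  rwa [ENNReal.inv_mul_le_iff hQ.volume_ne_zero hQ.volume_ne_top, mul_one]

theorem exists_isCube_volume_lt_of_lt_orliczMax {n : ℕ} {lam t : ℝ} {f : (Fin n → ℝ) → ℝ}
    {x : Fin n → ℝ} (ht : 0 < t) (hx : ENNReal.ofReal t < orliczMax n lam f x) :
    ∃ Q, IsCube n Q ∧ x ∈ Q ∧
      volume Q < ∫⁻ y in Q, ENNReal.ofReal (PhiLam lam (|f y| / t)) := by
  simp only [orliczMax, lt_iSup_iff] at hx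
  obtain ⟨Q, hQ, hxQ, hlt⟩ := hx
  exact ⟨Q, hQ, hxQ, lt_of_not_ge fun h => hlt.not_ge (luxNorm_le_of_setLIntegral_le hQ ht h)⟩

theorem exists_closedBall_volume_lt_of_lt_orliczMax {n : ℕ} {lam t : ℝ}
    {f : (Fin n → ℝ) → ℝ} {x : Fin n → ℝ} (ht : 0 < t)
    (hx : ENNReal.ofReal t < orliczMax n lam f x) :
    ∃ r, 0 < r ∧ volume (closedBall x r) <
      2 ^ n * ∫⁻ y in closedBall x r, ENNReal.ofReal (PhiLam lam (|f y| / t)) := by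
  obtain ⟨Q, hQ, hxQ, hlt⟩ := exists_isCube_volume_lt_of_lt_orliczMax ht hx
  obtain ⟨c, r, hr, rfl⟩ := isCube_iff_exists_closedBall.1 hQ
  have hsub : closedBall c r ⊆ closedBall x (2 * r) :=
    closedBall_subset_closedBall' (by rw [dist_comm]; linarith [mem_closedBall.1 hxQ])
  refine ⟨2 * r, by positivity, ?_⟩
  calc volume (closedBall x (2 * r)) = 2 ^ n * volume (closedBall c r) :=
        volume_closedBall_two_mul x hr.le c
    _ < 2 ^ n * ∫⁻ y in closedBall c r, ENNReal.ofReal (PhiLam lam (|f y| / t)) :=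
        (ENNReal.mul_lt_mul_iff_right (by positivity) (by simp)).2 hlt
    _ ≤ 2 ^ n * ∫⁻ y in closedBall x (2 * r), ENNReal.ofReal (PhiLam lam (|f y| / t)) := by
        gcongr

theorem rpow_lintegral_le_weighted_mul_dualWeight {α : Type*} [MeasurableSpace α]
    {μ : Measure α} {p : ℝ} (hp : 1 < p) {g w : α → ℝ≥0∞} (hg : AEMeasurable g μ)
    (hw : AEMeasurable w μ) (hw₀ : ∀ᵐ x ∂μ, w x ≠ 0 ∧ w x ≠ ⊤) :
    (∫⁻ x, g x ∂μ) ^ p ≤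
      (∫⁻ x, g x ^ p * w x ∂μ) * (∫⁻ x, w x ^ (1 - p / (p - 1)) ∂μ) ^ (p - 1) := by
  have hp₀ : 0 < p := by linarith
  have hp₁ : p - 1 ≠ 0 := by linarith
  set q := p / (p - 1) with hq
  have hpq : p.HolderConjugate q := Real.HolderConjugate.conjExponent hp
  have hsplit : ∫⁻ x, g x ∂μ = ∫⁻ x, (g x * w x ^ (1 / p)) * w x ^ (-(1 / p)) ∂μ := by
    refine lintegral_congr_ae (hw₀.mono fun x hx => ?_)
    dsimp only
    rw [mul_assoc, ← ENNReal.rpow_add _ _ hx.1 hx.2, add_neg_cancel, ENNReal.rpow_zero, mul_one]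
  have hholder := ENNReal.lintegral_mul_le_Lp_mul_Lq μ hpq (hg.mul (hw.pow_const (1 / p)))
    (hw.pow_const (-(1 / p)))
  have hfirst : ∀ x, (g x * w x ^ (1 / p)) ^ p = g x ^ p * w x := fun x => by
    rw [ENNReal.mul_rpow_of_nonneg _ _ hp₀.le, ← ENNReal.rpow_mul, one_div_mul_cancel hp₀.ne',
      ENNReal.rpow_one]
  have hsecond : ∀ x, (w x ^ (-(1 / p))) ^ q = w x ^ (1 - q) := fun x => by
    rw [← ENNReal.rpow_mul, hq]
    congr 1
    field_simp
    ring
  simp only [Pi.mul_apply, hfirst, hsecond] at hholder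
  calc (∫⁻ x, g x ∂μ) ^ p
      ≤ ((∫⁻ x, g x ^ p * w x ∂μ) ^ (1 / p) * (∫⁻ x, w x ^ (1 - q) ∂μ) ^ (1 / q)) ^ p :=
        ENNReal.rpow_le_rpow (hsplit ▸ hholder) hp₀.le
    _ = (∫⁻ x, g x ^ p * w x ∂μ) * (∫⁻ x, w x ^ (1 - q) ∂μ) ^ (p - 1) := by
        rw [ENNReal.mul_rpow_of_nonneg _ _ hp₀.le, ← ENNReal.rpow_mul, ← ENNReal.rpow_mul,
          one_div_mul_cancel hp₀.ne', ENNReal.rpow_one, hq]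
        congr 2
        field_simp

section Weights

variable {n : ℕ} {p : ℝ} {w : (Fin n → ℝ) → ℝ≥0∞} {Q : Set (Fin n → ℝ)}

theorem setAvg_mul_rpow_le_ApConst (hQ : IsCube n Q) :
    setAvg n Q w * (setAvg n Q fun y => w y ^ (1 - p / (p - 1))) ^ (p - 1) ≤ ApConst n p w :=
  le_iSup₂ (f := fun Q (_ : IsCube n Q) =>
    setAvg n Q w * (setAvg n Q fun y => w y ^ (1 - p / (p - 1))) ^ (p - 1)) Q hQ

theorem setLIntegral_dualWeight_ne_top (hp : 1 < p) (hA : ApConst n p w ≠ ⊤) (hQ : IsCube n Q)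
    (hw₀ : ∫⁻ y in Q, w y ≠ 0) : ∫⁻ y in Q, w y ^ (1 - p / (p - 1)) ≠ ⊤ := by
  intro hS
  have hV : (volume Q)⁻¹ ≠ 0 := ENNReal.inv_ne_zero.2 hQ.volume_ne_top
  refine hA (top_le_iff.1 ((le_of_eq ?_).trans (setAvg_mul_rpow_le_ApConst (p := p) hQ)))
  rw [setAvg, setAvg, hS, ENNReal.mul_top hV, ENNReal.top_rpow_of_pos (sub_pos.2 hp),
    ENNReal.mul_top (mul_ne_zero hV hw₀)]

theorem ae_restrict_ne_zero_ne_top_of_ApConst_ne_top (hp : 1 < p) (hw : IsWeight n w)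
    (hA : ApConst n p w ≠ ⊤) (hQ : IsCube n Q) (hw₀ : ∫⁻ y in Q, w y ≠ 0) :
    ∀ᵐ x ∂volume.restrict Q, w x ≠ 0 ∧ w x ≠ ⊤ := by
  have hneg : 1 - p / (p - 1) < 0 := by
    rw [sub_neg, one_lt_div (by linarith)]
    linarith
  filter_upwards [ae_lt_top hw.1 (hw.2 Q hQ).ne,
    ae_lt_top (hw.1.pow_const _) (setLIntegral_dualWeight_ne_top hp hA hQ hw₀)] with x hx hx'
  refine ⟨fun h₀ => ?_, hx.ne⟩
  rw [h₀, ENNReal.zero_rpow_of_neg hneg] at hx'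
  exact lt_irrefl _ hx'

theorem setLIntegral_le_ApConst_mul_of_volume_le (hp : 1 < p) (hw : IsWeight n w)
    (hA : ApConst n p w ≠ ⊤) {g : (Fin n → ℝ) → ℝ≥0∞} (hg : Measurable g) (hQ : IsCube n Q)
    {ε : ℝ≥0∞} (hV : volume Q ≤ ε * ∫⁻ y in Q, g y) :
    ∫⁻ y in Q, w y ≤ ε ^ p * ApConst n p w * ∫⁻ y in Q, g y ^ p * w y := by
  have hp₀ : 0 < p := by linarith
  set V := volume Q
  set W := ∫⁻ y in Q, w y
  set S := ∫⁻ y in Q, w y ^ (1 - p / (p - 1))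
  set G := ∫⁻ y in Q, g y ^ p * w y
  rcases eq_or_ne W 0 with hW | hW
  · simp [hW]
  have hholder : (∫⁻ y in Q, g y) ^ p ≤ G * S ^ (p - 1) :=
    rpow_lintegral_le_weighted_mul_dualWeight hp hg.aemeasurable hw.1.aemeasurable
      (ae_restrict_ne_zero_ne_top_of_ApConst_ne_top hp hw hA hQ hW)
  have hVinv : V⁻¹ ^ p = V⁻¹ * V⁻¹ ^ (p - 1) := by
    have h := ENNReal.rpow_add_of_add_pos (ENNReal.inv_ne_top.2 hQ.volume_ne_zero) 1 (p - 1)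
      (by linarith)
    rwa [add_sub_cancel, ENNReal.rpow_one] at h
  calc W = V ^ p * (W * V⁻¹ ^ p) := by
        rw [ENNReal.inv_rpow, mul_left_comm, ENNReal.mul_inv_cancel, mul_one]
        all_goals simp [V, hQ.volume_ne_zero, hQ.volume_ne_top, hp₀]
    _ ≤ (ε * ∫⁻ y in Q, g y) ^ p * (W * V⁻¹ ^ p) := by gcongr
    _ = ε ^ p * (∫⁻ y in Q, g y) ^ p * (W * V⁻¹ ^ p) := by
        rw [ENNReal.mul_rpow_of_nonneg _ _ hp₀.le]
    _ ≤ ε ^ p * (G * S ^ (p - 1)) * (W * V⁻¹ ^ p) := by gcongr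
    _ = ε ^ p * (V⁻¹ * W * (V⁻¹ * S) ^ (p - 1)) * G := by
        rw [ENNReal.mul_rpow_of_nonneg _ _ (by linarith), hVinv]
        ring
    _ ≤ ε ^ p * ApConst n p w * G := by
        gcongr
        exact setAvg_mul_rpow_le_ApConst hQ

end Weights

namespace Besicovitch

variable {α : Type*} [MetricSpace α] [TopologicalSpace.SeparableSpace α] [MeasurableSpace α]
  [OpensMeasurableSpace α] {μ ν : Measure α} {C : ℝ≥0∞}

theorem measure_biUnion_closedBall_le {β : Type*} {c : β → α} {r : β → ℝ} (hr : ∀ j, 0 < r j)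
    {s : Set β} (hs : s.PairwiseDisjoint fun j => closedBall (c j) (r j))
    (h : ∀ j, μ (closedBall (c j) (r j)) ≤ C * ν (closedBall (c j) (r j))) :
    μ (⋃ j ∈ s, closedBall (c j) (r j)) ≤ C * ν univ := by
  have hcount : s.Countable := (hs.mono fun j => ball_subset_closedBall).countable_of_isOpen
    (fun j _ => isOpen_ball) (fun j _ => nonempty_ball.2 (hr j))
  calc μ (⋃ j ∈ s, closedBall (c j) (r j)) ≤ ∑' j : s, μ (closedBall (c j) (r j)) :=
        measure_biUnion_le μ hcount _
    _ ≤ ∑' j : s, C * ν (closedBall (c j) (r j)) := ENNReal.tsum_le_tsum fun j => h j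
    _ = C * ν (⋃ j ∈ s, closedBall (c j) (r j)) := by
        rw [ENNReal.tsum_mul_left, measure_biUnion hcount hs fun j _ => measurableSet_closedBall]
    _ ≤ C * ν univ := by gcongr; exact subset_univ _

theorem measure_le_of_forall_closedBall_le_of_le {N : ℕ} {τ : ℝ} (hτ : 1 < τ)
    (hN : IsEmpty (SatelliteConfig α N τ)) {s : Set α} {R : ℝ}
    (h : ∀ x ∈ s, ∃ r, 0 < r ∧ r ≤ R ∧ μ (closedBall x r) ≤ C * ν (closedBall x r)) :
    μ s ≤ N * C * ν univ := by
  choose! r hr₀ hrR hr using h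
  let q : BallPackage s α :=
    { c := (↑), r := fun x => r x, rpos := fun x => hr₀ x x.2, r_bound := R,
      r_le := fun x => hrR x x.2 }
  obtain ⟨t, htd, htcov⟩ := exist_disjoint_covering_families hτ hN q
  have hcov : s ⊆ ⋃ i, ⋃ j ∈ t i, closedBall (q.c j) (q.r j) := by
    refine (Subtype.range_coe (s := s)).symm.subset.trans (htcov.trans ?_)
    exact iUnion_mono fun i => iUnion₂_mono fun j _ => ball_subset_closedBall
  calc μ s ≤ ∑ i, μ (⋃ j ∈ t i, closedBall (q.c j) (q.r j)) :=
        (measure_mono hcov).trans (measure_iUnion_fintype_le _ _)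
    _ ≤ ∑ _i : Fin N, C * ν univ :=
        Finset.sum_le_sum fun i _ => measure_biUnion_closedBall_le q.rpos (htd i) fun j => hr j j.2
    _ = N * C * ν univ := by simp [mul_assoc]

theorem exists_measure_le_of_forall_closedBall_le [HasBesicovitchCovering α] :
    ∃ N : ℕ, ∀ (μ ν : Measure α) (C : ℝ≥0∞) (s : Set α),
      (∀ x ∈ s, ∃ r, 0 < r ∧ μ (closedBall x r) ≤ C * ν (closedBall x r)) →
      μ s ≤ N * C * ν univ := by
  obtain ⟨N, τ, hτ, hN⟩ := HasBesicovitchCovering.no_satelliteConfig (α := α)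
  refine ⟨N, fun μ ν C s h => ?_⟩
  -- the covering theorem needs bounded radii: exhaust `s` by the points served by radii `≤ m`
  let E : ℕ → Set α := fun m =>
    {x | ∃ r : ℝ, 0 < r ∧ r ≤ m ∧ μ (closedBall x r) ≤ C * ν (closedBall x r)}
  have hsE : s ⊆ ⋃ m, E m := fun x hx => by
    obtain ⟨r, hr₀, hr⟩ := h x hx
    exact mem_iUnion.2 ⟨⌈r⌉₊, r, hr₀, Nat.le_ceil r, hr⟩
  have hE : Monotone E := fun m m' hm x ⟨r, hr₀, hrm, hr⟩ =>
    ⟨r, hr₀, hrm.trans (Nat.cast_le.2 hm), hr⟩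
  calc μ s ≤ μ (⋃ m, E m) := measure_mono hsE
    _ = ⨆ m, μ (E m) := hE.measure_iUnion
    _ ≤ N * C * ν univ :=
        iSup_le fun m => measure_le_of_forall_closedBall_le_of_le (R := m) hτ hN fun _ hx => hx

end Besicovitch

theorem statement13_general (n : ℕ) (lam : ℝ)
    (p : ℝ) (hp : 1 < p) :
    ∃ c : ℝ≥0∞, 0 < c ∧ c < ∞ ∧
      ∀ w : (Fin n → ℝ) → ℝ≥0∞, IsWeight n w → ApConst n p w < ∞ →
        ∀ t : ℝ, 0 < t → ∀ f : (Fin n → ℝ) → ℝ, Measurable f → (∀ x, 0 ≤ f x) →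
          (∫⁻ x in {x | ENNReal.ofReal t < orliczMax n lam f x}, w x) ≤
            c * ApConst n p w *
              ∫⁻ x, ENNReal.ofReal (PhiLam lam (f x / t)) ^ p * w x := by
  obtain ⟨N, hN⟩ := Besicovitch.exists_measure_le_of_forall_closedBall_le (α := Fin n → ℝ)
  have h2n : (2 : ℝ≥0∞) ^ n ≠ ⊤ := ENNReal.pow_ne_top ENNReal.ofNat_ne_top
  have hdil : ((2 : ℝ≥0∞) ^ n) ^ p ≠ ⊤ := ENNReal.rpow_ne_top_of_nonneg (by linarith) h2n
  refine ⟨(N + 1) * (2 ^ n) ^ p, by positivity,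
    ENNReal.mul_lt_top (by simp) hdil.lt_top, fun w hw hA t ht f hf hf₀ => ?_⟩
  set g : (Fin n → ℝ) → ℝ≥0∞ := fun y => ENNReal.ofReal (PhiLam lam (|f y| / t))
  have hg : Measurable g := by
    unfold g PhiLam
    fun_prop
  have hlevel := hN (volume.withDensity w) (volume.withDensity fun x => g x ^ p * w x)
    ((2 ^ n) ^ p * ApConst n p w) {x | ENNReal.ofReal t < orliczMax n lam f x} fun x hx => by
      obtain ⟨r, hr, hlt⟩ := exists_closedBall_volume_lt_of_lt_orliczMax ht hx
      refine ⟨r, hr, ?_⟩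
      simp only [withDensity_apply _ measurableSet_closedBall]
      exact setLIntegral_le_ApConst_mul_of_volume_le hp hw hA.ne hg
        (isCube_iff_exists_closedBall.2 ⟨x, r, hr, rfl⟩) hlt.le
  rw [withDensity_apply', withDensity_apply _ MeasurableSet.univ, Measure.restrict_univ] at hlevel
  have hg_eq : ∀ x, g x = ENNReal.ofReal (PhiLam lam (f x / t)) := fun x => by
    simp only [g, abs_of_nonneg (hf₀ x)]
  simp only [hg_eq] at hlevel
  calc _ ≤ _ := hlevel
    _ ≤ (N + 1) * ((2 ^ n) ^ p * ApConst n p w) *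
          ∫⁻ x, ENNReal.ofReal (PhiLam lam (f x / t)) ^ p * w x := by
        gcongr
        exact le_self_add
    _ = _ := by ring

/-- the weak type `(p,p)` estimate for the Orlicz maximal operator with
linear dependence on the `A_p` constant:
`w({M_{Φ_λ}f > t}) ≤ c [w]_{A_p} ∫ Φ_λ(f/t)^p w dx`. -/
theorem statement13 (n : ℕ) (hn : 1 ≤ n) (lam : ℝ) (hlam : 0 ≤ lam)
    (p : ℝ) (hp : 1 < p) :
    ∃ c : ℝ≥0∞, 0 < c ∧ c < ∞ ∧
      ∀ w : (Fin n → ℝ) → ℝ≥0∞, IsWeight n w → ApConst n p w < ∞ →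
        ∀ t : ℝ, 0 < t → ∀ f : (Fin n → ℝ) → ℝ, Measurable f → (∀ x, 0 ≤ f x) →
          (∫⁻ x in {x | ENNReal.ofReal t < orliczMax n lam f x}, w x) ≤
            c * ApConst n p w *
              ∫⁻ x, ENNReal.ofReal (PhiLam lam (f x / t)) ^ p * w x :=
  statement13_general n lam p hp
end

section
/- Let n ≥ 1 and let 𝓑 be a collection of open subsets of ℝ^n, each of finite positive Lebesgue measure. Assume that the associated maximal operator M_𝓑 is bounded on unweighted L^p(ℝ^n) for every 1 < p < ∞, and that limsup_{p→1⁺} ‖M_𝓑‖_{L^p(ℝ^n)} = ∞. Let 1 < p₀ < ∞ and β ≥ 0, and suppose there is a constant c > 0 such that for every weight w with [w]_{A_{p₀,𝓑}} < ∞ and every f with ‖f‖_{L^{p₀}(w)} < ∞, ‖M_𝓑 f‖_{L^{p₀}(w)} ≤ c [w]_{A_{p₀,𝓑}}^β ‖f‖_{L^{p₀}(w)}. Then β ≥ 1/(p₀−1). -/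
/-!
For `1 < p < p₀` put `N = ‖M_𝓑‖_{L^p}` and `C = 2(N + 1)`. Rubio de Francia's algorithm
`V = ∑ₖ C⁻ᵏ M_𝓑ᵏ g` gives `g ≤ V`, `‖V‖_p ≤ 2‖g‖_p` and `M_𝓑 V ≤ C V`. The last property and
Jensen's inequality give `[V^{p-p₀}]_{A_{p₀,𝓑}} ≤ C^{p₀-1}`, while Hölder's inequality gives
`‖M_𝓑 g‖_p ≤ ‖M_𝓑 g‖_{L^{p₀}(V^{p-p₀})} ‖V‖_p^{1-p/p₀}` and `‖g‖_{L^{p₀}(V^{p-p₀})} ≤ ‖V‖_p^{p/p₀}`.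
The weighted bound therefore yields `N ≤ 2c (2(N + 1))^{β(p₀-1)}`. If `β(p₀-1) < 1`, this bounds `N`
uniformly for `p ∈ (1, p₀)`, contradicting the blow-up of `‖M_𝓑‖_{L^p}` as `p → 1⁺`.
-/

open MeasureTheory Filter
open scoped ENNReal NNReal

/-- The maximal operator associated to a basis `𝓑`:
`M_𝓑 f(x) = sup_{x ∈ B ∈ 𝓑} ⨍_B |f|` (and `0` if `x` lies in no member of `𝓑`). -/
noncomputable def basisMax (n : ℕ) (𝓑 : Set (Set (Fin n → ℝ)))
    (g : (Fin n → ℝ) → ℝ≥0∞) : (Fin n → ℝ) → ℝ≥0∞ :=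
  fun x => ⨆ (B ∈ 𝓑) (_ : x ∈ B), setAvg n B g

/-- The `A_{p,𝓑}` constant of a weight `w` relative to the basis `𝓑`. -/
noncomputable def ApBasisConst (n : ℕ) (p : ℝ) (𝓑 : Set (Set (Fin n → ℝ)))
    (w : (Fin n → ℝ) → ℝ≥0∞) : ℝ≥0∞ :=
  ⨆ (B ∈ 𝓑),
    setAvg n B w * (setAvg n B fun y => w y ^ (1 - p / (p - 1))) ^ (p - 1)

/-- The operator norm of `M_𝓑` on unweighted `L^p(ℝⁿ)`. -/
noncomputable def basisMaxOpNorm (n : ℕ) (𝓑 : Set (Set (Fin n → ℝ))) (p : ℝ) : ℝ≥0∞ :=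
  sInf {C : ℝ≥0∞ | ∀ f : (Fin n → ℝ) → ℝ, Measurable f → lpNorm n p f < ∞ →
    lpNormE n p (basisMax n 𝓑 fun y => (‖f y‖₊ : ℝ≥0∞)) ≤ C * lpNorm n p f}

open ProbabilityTheory
open scoped Topology

section BasisMax

variable {n : ℕ} {𝓑 : Set (Set (Fin n → ℝ))} {B : Set (Fin n → ℝ)} {g h : (Fin n → ℝ) → ℝ≥0∞}

lemma setAvg_eq_lintegral_cond (B : Set (Fin n → ℝ)) (g : (Fin n → ℝ) → ℝ≥0∞) :
    setAvg n B g = ∫⁻ y, g y ∂(volume[|B]) := by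
  rw [ProbabilityTheory.cond, lintegral_smul_measure]
  rfl

lemma setAvg_mono (hgh : g ≤ h) : setAvg n B g ≤ setAvg n B h := by
  unfold setAvg
  gcongr
  exact hgh _

lemma setAvg_le_of_forall_le (hB : MeasurableSet B) (hB0 : volume B ≠ 0) (hBt : volume B ≠ ∞)
    {a : ℝ≥0∞} (hga : ∀ x ∈ B, g x ≤ a) : setAvg n B g ≤ a := by
  have : IsProbabilityMeasure (volume[|B]) := cond_isProbabilityMeasure_of_finite hB0 hBt
  rw [setAvg_eq_lintegral_cond]
  calc ∫⁻ y, g y ∂(volume[|B]) ≤ ∫⁻ _, a ∂(volume[|B]) :=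
        lintegral_mono_ae ((ae_cond_mem hB).mono hga)
    _ = a := by simp

lemma setAvg_rpow_le (hB0 : volume B ≠ 0) (hBt : volume B ≠ ∞) (hg : Measurable g) {s : ℝ}
    (hs0 : 0 < s) (hs1 : s ≤ 1) : setAvg n B (fun y => g y ^ s) ≤ setAvg n B g ^ s := by
  have : IsProbabilityMeasure (volume[|B]) := cond_isProbabilityMeasure_of_finite hB0 hBt
  have hJ := eLpNorm'_le_eLpNorm'_of_exponent_le hs0 hs1 (volume[|B]) hg.aestronglyMeasurable
  simp only [eLpNorm', enorm_eq_self, ENNReal.rpow_one, div_one] at hJ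
  rw [setAvg_eq_lintegral_cond, setAvg_eq_lintegral_cond]
  rwa [one_div, ENNReal.rpow_inv_le_iff hs0] at hJ

lemma setAvg_le_basisMax (hB : B ∈ 𝓑) {x : Fin n → ℝ} (hx : x ∈ B) (g : (Fin n → ℝ) → ℝ≥0∞) :
    setAvg n B g ≤ basisMax n 𝓑 g x :=
  le_iSup₂_of_le B hB (le_iSup_of_le hx le_rfl)

lemma basisMax_mono (hgh : g ≤ h) : basisMax n 𝓑 g ≤ basisMax n 𝓑 h := fun _ =>
  iSup₂_mono fun _ _ => iSup_mono fun _ => setAvg_mono hgh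

lemma basisMax_congr_ae (hgh : g =ᵐ[volume] h) : basisMax n 𝓑 g = basisMax n 𝓑 h := by
  have hB : ∀ B, setAvg n B g = setAvg n B h := fun B => by
    rw [setAvg, setAvg, lintegral_congr_ae (ae_restrict_of_ae hgh)]
  unfold basisMax
  simp only [hB]

lemma basisMax_const_mul (a : ℝ≥0∞) (hg : Measurable g) :
    basisMax n 𝓑 (fun y => a * g y) = fun x => a * basisMax n 𝓑 g x := by
  funext x
  simp only [basisMax, setAvg, lintegral_const_mul a hg, ENNReal.mul_iSup, mul_left_comm a]

lemma basisMax_tsum_le {g : ℕ → (Fin n → ℝ) → ℝ≥0∞} (hg : ∀ k, Measurable (g k)) :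
    basisMax n 𝓑 (fun y => ∑' k, g k y) ≤ fun x => ∑' k, basisMax n 𝓑 (g k) x := by
  intro x
  refine iSup₂_le fun B hB => iSup_le fun hx => ?_
  rw [setAvg, lintegral_tsum fun k => (hg k).aemeasurable, ← ENNReal.tsum_mul_left]
  exact ENNReal.tsum_le_tsum fun k => setAvg_le_basisMax hB hx (g k)

lemma measurable_basisMax (hopen : ∀ B ∈ 𝓑, IsOpen B) (g : (Fin n → ℝ) → ℝ≥0∞) :
    Measurable (basisMax n 𝓑 g) := by
  refine measurable_of_Ioi fun t => ?_
  have : basisMax n 𝓑 g ⁻¹' Set.Ioi t = ⋃ B ∈ {B ∈ 𝓑 | t < setAvg n B g}, B := by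
    ext x
    simp only [Set.mem_preimage, Set.mem_Ioi, basisMax, lt_iSup_iff, Set.mem_iUnion,
      Set.mem_ofPred_eq]
    aesop
  rw [this]
  exact (isOpen_biUnion fun B hB => hopen B hB.1).measurableSet

end BasisMax

section LpNorm

variable {n : ℕ} {p : ℝ} {g h : (Fin n → ℝ) → ℝ≥0∞}

lemma lpNormE_mono (hp : 0 ≤ p) (hgh : g ≤ h) : lpNormE n p g ≤ lpNormE n p h := by
  unfold lpNormE
  gcongr
  exact hgh _

lemma lpNormE_const_mul (hp : 0 < p) (a : ℝ≥0∞) (hg : Measurable g) :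
    lpNormE n p (fun x => a * g x) = a * lpNormE n p g := by
  simp only [lpNormE, ENNReal.mul_rpow_of_nonneg _ _ hp.le]
  rw [lintegral_const_mul _ (hg.pow_const p), ENNReal.mul_rpow_of_nonneg _ _ (by positivity),
    ← ENNReal.rpow_mul, mul_one_div_cancel hp.ne', ENNReal.rpow_one]

lemma lpNormE_add_le (hp : 1 ≤ p) (hg : Measurable g) (hh : Measurable h) :
    lpNormE n p (fun x => g x + h x) ≤ lpNormE n p g + lpNormE n p h :=
  ENNReal.lintegral_Lp_add_le hg.aemeasurable hh.aemeasurable hp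

lemma lpNormE_sum_le {ι : Type*} (hp : 1 ≤ p) (s : Finset ι) {g : ι → (Fin n → ℝ) → ℝ≥0∞}
    (hg : ∀ i, Measurable (g i)) :
    lpNormE n p (fun x => ∑ i ∈ s, g i x) ≤ ∑ i ∈ s, lpNormE n p (g i) := by
  classical
  induction s using Finset.induction_on with
  | empty =>
    simp [lpNormE, zero_lt_one.trans_le hp]
  | insert i s hi ih =>
    simp only [Finset.sum_insert hi]
    exact (lpNormE_add_le hp (hg i) (Finset.measurable_sum s fun j _ => hg j)).trans
      (by gcongr)

lemma lpNormE_iSup (hp : 0 < p) {g : ℕ → (Fin n → ℝ) → ℝ≥0∞} (hg : ∀ k, Measurable (g k))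
    (hmono : Monotone g) : lpNormE n p (fun x => ⨆ k, g k x) = ⨆ k, lpNormE n p (g k) := by
  simp only [lpNormE]
  have hpow : ∀ x, (⨆ k, g k x) ^ p = ⨆ k, g k x ^ p := fun x =>
    (ENNReal.orderIsoRpow p hp).map_iSup _
  simp only [hpow]
  rw [lintegral_iSup (fun k => (hg k).pow_const p)
    fun _ _ hkl x => ENNReal.rpow_le_rpow (hmono hkl x) hp.le]
  exact (ENNReal.orderIsoRpow (1 / p) (one_div_pos.2 hp)).map_iSup _

lemma lpNormE_tsum_le (hp : 1 ≤ p) {g : ℕ → (Fin n → ℝ) → ℝ≥0∞} (hg : ∀ k, Measurable (g k)) :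
    lpNormE n p (fun x => ∑' k, g k x) ≤ ∑' k, lpNormE n p (g k) := by
  simp only [ENNReal.tsum_eq_iSup_nat]
  rw [lpNormE_iSup (zero_lt_one.trans_le hp) (fun K => Finset.measurable_sum _ fun k _ => hg k)
    fun K L hKL x => Finset.sum_le_sum_of_subset (Finset.range_subset_range.2 hKL)]
  exact iSup_mono fun K => lpNormE_sum_le hp _ hg

lemma ae_lt_top_of_lpNormE_ne_top (hp : 0 < p) (hg : Measurable g) (hgp : lpNormE n p g ≠ ∞) :
    ∀ᵐ x, g x < ∞ := by
  have hint : ∫⁻ x, g x ^ p ≠ ∞ := fun htop => by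
    simp [lpNormE, htop, hp] at hgp
  filter_upwards [ae_lt_top (hg.pow_const p) hint] with x hx
  exact (ENNReal.rpow_lt_top_iff_of_pos hp).1 hx

end LpNorm

lemma lpNormE_basisMax_le {n : ℕ} {𝓑 : Set (Set (Fin n → ℝ))} {p : ℝ} (hp : 0 < p)
    (hN : basisMaxOpNorm n 𝓑 p ≠ ∞) {g : (Fin n → ℝ) → ℝ≥0∞} (hg : Measurable g)
    (hgp : lpNormE n p g ≠ ∞) :
    lpNormE n p (basisMax n 𝓑 g) ≤ basisMaxOpNorm n 𝓑 p * lpNormE n p g := by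
  set f : (Fin n → ℝ) → ℝ := fun x => (g x).toReal
  have hfg : (fun x => (‖f x‖₊ : ℝ≥0∞)) =ᵐ[volume] g := by
    filter_upwards [ae_lt_top_of_lpNormE_ne_top hp hg hgp] with x hx
    rw [← enorm_eq_nnnorm, Real.enorm_of_nonneg ENNReal.toReal_nonneg, ENNReal.ofReal_toReal hx.ne]
  have hnorm : lpNorm n p f = lpNormE n p g := by
    rw [_root_.lpNorm, lpNormE]
    congr 1
    refine lintegral_congr_ae ?_
    filter_upwards [hfg] with x hx
    rw [hx]
  have hS : Set.Nonempty {C : ℝ≥0∞ | ∀ f : (Fin n → ℝ) → ℝ, Measurable f → lpNorm n p f < ∞ →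
      lpNormE n p (basisMax n 𝓑 fun y => (‖f y‖₊ : ℝ≥0∞)) ≤ C * lpNorm n p f} :=
    Set.nonempty_iff_ne_empty.2 fun h => hN (by rw [basisMaxOpNorm, h, sInf_empty])
  have hne := hS.to_subtype
  rw [basisMaxOpNorm, sInf_eq_iInf', ENNReal.iInf_mul' (fun h => absurd h hgp) fun _ => hne]
  refine le_iInf fun ⟨C, hC⟩ => ?_
  have hCf := hC f hg.ennreal_toReal (hnorm ▸ hgp.lt_top)
  rwa [basisMax_congr_ae hfg, hnorm] at hCf

section RubioDeFrancia

variable {n : ℕ} {𝓑 : Set (Set (Fin n → ℝ))} {g : (Fin n → ℝ) → ℝ≥0∞}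

noncomputable def rubioDeFrancia (n : ℕ) (𝓑 : Set (Set (Fin n → ℝ))) (C : ℝ≥0∞)
    (g : (Fin n → ℝ) → ℝ≥0∞) (x : Fin n → ℝ) : ℝ≥0∞ :=
  ∑' k : ℕ, C⁻¹ ^ k * (basisMax n 𝓑)^[k] g x

lemma measurable_iterate_basisMax (hopen : ∀ B ∈ 𝓑, IsOpen B) (hg : Measurable g) (k : ℕ) :
    Measurable ((basisMax n 𝓑)^[k] g) := by
  induction k with
  | zero => exact hg
  | succ k _ =>
    rw [Function.iterate_succ_apply']
    exact measurable_basisMax hopen _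

lemma measurable_rubioDeFrancia (hopen : ∀ B ∈ 𝓑, IsOpen B) (hg : Measurable g) (C : ℝ≥0∞) :
    Measurable (rubioDeFrancia n 𝓑 C g) :=
  Measurable.tsum fun k => (measurable_iterate_basisMax hopen hg k).const_mul _

lemma le_rubioDeFrancia (C : ℝ≥0∞) (g : (Fin n → ℝ) → ℝ≥0∞) : g ≤ rubioDeFrancia n 𝓑 C g :=
  fun x => le_of_eq_of_le (by simp) (ENNReal.le_tsum 0)

lemma basisMax_rubioDeFrancia_le (hopen : ∀ B ∈ 𝓑, IsOpen B) (hg : Measurable g) {C : ℝ≥0∞}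
    (hC0 : C ≠ 0) (hCt : C ≠ ∞) :
    basisMax n 𝓑 (rubioDeFrancia n 𝓑 C g) ≤ fun x => C * rubioDeFrancia n 𝓑 C g x := by
  intro x
  have hG := measurable_iterate_basisMax hopen hg
  calc basisMax n 𝓑 (rubioDeFrancia n 𝓑 C g) x
      ≤ ∑' k, basisMax n 𝓑 (fun y => C⁻¹ ^ k * (basisMax n 𝓑)^[k] g y) x :=
        basisMax_tsum_le (fun k => (hG k).const_mul _) x
    _ = C * ∑' k, C⁻¹ ^ (k + 1) * (basisMax n 𝓑)^[k + 1] g x := by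
        rw [← ENNReal.tsum_mul_left]
        refine tsum_congr fun k => ?_
        rw [basisMax_const_mul _ (hG k), Function.iterate_succ_apply', pow_succ', ← mul_assoc,
          ← mul_assoc, ENNReal.mul_inv_cancel hC0 hCt, one_mul]
    _ ≤ C * rubioDeFrancia n 𝓑 C g x := by
        gcongr
        exact ENNReal.tsum_comp_le_tsum_of_injective (add_left_injective 1) _

variable {p : ℝ}

lemma lpNormE_iterate_basisMax_le (hopen : ∀ B ∈ 𝓑, IsOpen B) (hp : 0 < p)
    (hN : basisMaxOpNorm n 𝓑 p ≠ ∞) (hg : Measurable g) (hgp : lpNormE n p g ≠ ∞) (k : ℕ) :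
    lpNormE n p ((basisMax n 𝓑)^[k] g) ≤ basisMaxOpNorm n 𝓑 p ^ k * lpNormE n p g := by
  induction k with
  | zero => simp
  | succ k ih =>
    have hfin : lpNormE n p ((basisMax n 𝓑)^[k] g) ≠ ∞ :=
      ne_top_of_le_ne_top (ENNReal.mul_ne_top (ENNReal.pow_ne_top hN) hgp) ih
    rw [Function.iterate_succ_apply', pow_succ', mul_assoc]
    exact (lpNormE_basisMax_le hp hN (measurable_iterate_basisMax hopen hg k) hfin).trans
      (by gcongr)

lemma lpNormE_rubioDeFrancia_le (hopen : ∀ B ∈ 𝓑, IsOpen B) (hp : 1 ≤ p)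
    (hN : basisMaxOpNorm n 𝓑 p ≠ ∞) {C : ℝ≥0∞} (hC : 2 * basisMaxOpNorm n 𝓑 p ≤ C)
    (hg : Measurable g) (hgp : lpNormE n p g ≠ ∞) :
    lpNormE n p (rubioDeFrancia n 𝓑 C g) ≤ 2 * lpNormE n p g := by
  set N := basisMaxOpNorm n 𝓑 p
  have hG := measurable_iterate_basisMax hopen hg
  have hCN : C⁻¹ * N ≤ 2⁻¹ := by
    rw [← ENNReal.div_eq_inv_mul, ENNReal.div_le_iff_le_mul (by simp) (by simp)]
    calc N = 2⁻¹ * (2 * N) := by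
          rw [← mul_assoc, ENNReal.inv_mul_cancel two_ne_zero ENNReal.ofNat_ne_top, one_mul]
      _ ≤ 2⁻¹ * C := by gcongr
  calc lpNormE n p (rubioDeFrancia n 𝓑 C g)
      ≤ ∑' k, lpNormE n p (fun x => C⁻¹ ^ k * (basisMax n 𝓑)^[k] g x) :=
        lpNormE_tsum_le hp fun k => (hG k).const_mul _
    _ ≤ ∑' k : ℕ, 2⁻¹ ^ k * lpNormE n p g := by
        refine ENNReal.tsum_le_tsum fun k => ?_
        rw [lpNormE_const_mul (zero_lt_one.trans_le hp) _ (hG k)]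
        calc C⁻¹ ^ k * lpNormE n p ((basisMax n 𝓑)^[k] g)
            ≤ C⁻¹ ^ k * (N ^ k * lpNormE n p g) := by
              gcongr
              exact lpNormE_iterate_basisMax_le hopen (zero_lt_one.trans_le hp) hN hg hgp k
          _ = (C⁻¹ * N) ^ k * lpNormE n p g := by rw [mul_pow, mul_assoc]
          _ ≤ 2⁻¹ ^ k * lpNormE n p g := by gcongr
    _ = 2 * lpNormE n p g := by
        rw [ENNReal.tsum_mul_right, ENNReal.tsum_geometric, ENNReal.one_sub_inv_two, inv_inv]

end RubioDeFrancia

lemma ENNReal.rpow_le_rpow_of_nonpos {x y : ℝ≥0∞} {z : ℝ} (hxy : x ≤ y) (hz : z ≤ 0) :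
    y ^ z ≤ x ^ z := by
  rw [← neg_neg z, ENNReal.rpow_neg y, ENNReal.rpow_neg x]
  exact ENNReal.inv_le_inv.2 (ENNReal.rpow_le_rpow hxy (neg_nonneg.2 hz))

section Weights

variable {n : ℕ}

lemma IsCube.isCompact {Q : Set (Fin n → ℝ)} (hQ : IsCube n Q) : IsCompact Q := by
  obtain ⟨a, h, -, rfl⟩ := hQ
  convert isCompact_univ_pi fun i => isCompact_Icc (a := a i) (b := a i + h)
  ext
  simp [Pi.le_def, forall_and]

lemma IsWeight.mono {w w' : (Fin n → ℝ) → ℝ≥0∞} (hw' : IsWeight n w') (hw : Measurable w)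
    (hle : w ≤ w') : IsWeight n w :=
  ⟨hw, fun Q hQ => (lintegral_mono fun x => hle x).trans_lt (hw'.2 Q hQ)⟩

lemma isWeight_ofReal_rpow {u : (Fin n → ℝ) → ℝ} (hu : Continuous u) (hpos : ∀ x, 0 < u x)
    (e : ℝ) : IsWeight n fun x => ENNReal.ofReal (u x) ^ e := by
  have hcont : Continuous fun x => u x ^ e := hu.rpow_const fun x => Or.inl (hpos x).ne'
  simp only [ENNReal.ofReal_rpow_of_pos (hpos _)]
  exact ⟨ENNReal.measurable_ofReal.comp hcont.measurable, fun Q hQ =>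
    (hcont.continuousOn.integrableOn_compact hQ.isCompact).lintegral_lt_top⟩

variable {𝓑 : Set (Set (Fin n → ℝ))}

lemma apBasisConst_rpow_le (hopen : ∀ B ∈ 𝓑, IsOpen B)
    (hvol : ∀ B ∈ 𝓑, 0 < volume B ∧ volume B < ∞) {p p₀ : ℝ} (hp : 1 ≤ p) (hpp₀ : p < p₀)
    {V : (Fin n → ℝ) → ℝ≥0∞} (hV : Measurable V) {C : ℝ≥0∞} (hC0 : C ≠ 0) (hCt : C ≠ ∞)
    (hMV : basisMax n 𝓑 V ≤ fun x => C * V x) :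
    ApBasisConst n p₀ 𝓑 (fun x => V x ^ (p - p₀)) ≤ C ^ (p₀ - p) := by
  set r := p₀ - p
  have hr0 : 0 < r := sub_pos.2 hpp₀
  have hp₀ : 0 < p₀ - 1 := by linarith
  have hCr0 : C ^ r ≠ 0 := (ENNReal.rpow_pos (pos_iff_ne_zero.2 hC0) hCt).ne'
  have hCrt : C ^ r ≠ ∞ := ENNReal.rpow_ne_top_of_nonneg hr0.le hCt
  refine iSup₂_le fun B hB => ?_
  obtain ⟨hB0, hBt⟩ := hvol B hB
  set a := setAvg n B V
  have hw : setAvg n B (fun x => V x ^ (p - p₀)) ≤ C ^ r * (a ^ r)⁻¹ := by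
    refine setAvg_le_of_forall_le (hopen B hB).measurableSet hB0.ne' hBt.ne fun x hx => ?_
    have haV : a ^ r ≤ C ^ r * V x ^ r := by
      rw [← ENNReal.mul_rpow_of_nonneg _ _ hr0.le]
      exact ENNReal.rpow_le_rpow ((setAvg_le_basisMax hB hx V).trans (hMV x)) hr0.le
    calc V x ^ (p - p₀) = C ^ r * (C ^ r * V x ^ r)⁻¹ := by
          rw [ENNReal.mul_inv (Or.inl hCr0) (Or.inl hCrt), ← mul_assoc,
            ENNReal.mul_inv_cancel hCr0 hCrt, one_mul, ← ENNReal.rpow_neg, neg_sub]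
      _ ≤ C ^ r * (a ^ r)⁻¹ := by gcongr
  -- the dual weight is `V ^ s` with `s = r / (p₀ - 1) ≤ 1`, so Jensen's inequality applies
  have hJ : (setAvg n B fun y => (V y ^ (p - p₀)) ^ (1 - p₀ / (p₀ - 1))) ^ (p₀ - 1) ≤ a ^ r := by
    have hdual : ∀ y, (V y ^ (p - p₀)) ^ (1 - p₀ / (p₀ - 1)) = V y ^ (r / (p₀ - 1)) := by
      intro y
      rw [← ENNReal.rpow_mul]
      congr 1
      field_simp
      ring
    simp only [hdual]
    calc _ ≤ (a ^ (r / (p₀ - 1))) ^ (p₀ - 1) := by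
          gcongr
          exact setAvg_rpow_le hB0.ne' hBt.ne hV (div_pos hr0 hp₀)
            ((div_le_one hp₀).2 (by linarith))
      _ = a ^ r := by rw [← ENNReal.rpow_mul, div_mul_cancel₀ _ hp₀.ne']
  -- `(a ^ r)⁻¹ * a ^ r ≤ 1` holds in `ℝ≥0∞` also when `a` is `0` or `∞`
  calc _ ≤ C ^ r * (a ^ r)⁻¹ * a ^ r := mul_le_mul' hw hJ
    _ ≤ C ^ r := by
        rw [mul_assoc]
        exact mul_le_of_le_one_right' (ENNReal.inv_mul_le_one _)

end Weights

section ChangeOfWeight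

variable {n : ℕ} {p p₀ : ℝ} {V : (Fin n → ℝ) → ℝ≥0∞}

lemma wLpNormE_le_lpNormE_rpow (hp : 0 < p) (hpp₀ : p < p₀) {g : (Fin n → ℝ) → ℝ≥0∞}
    (hgV : g ≤ V) : wLpNormE n p₀ (fun x => V x ^ (p - p₀)) g ≤ lpNormE n p V ^ (p / p₀) := by
  have hp₀ : 0 < p₀ := hp.trans hpp₀
  have hpt : ∀ x, g x ^ p₀ * V x ^ (p - p₀) ≤ V x ^ p := by
    intro x
    calc g x ^ p₀ * V x ^ (p - p₀) ≤ V x ^ p₀ * V x ^ (p - p₀) := by gcongr; exact hgV x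
      _ ≤ V x ^ p := by
        rcases eq_or_ne (V x) 0 with h0 | h0
        · simp [h0, ENNReal.zero_rpow_of_pos hp₀]
        rcases eq_or_ne (V x) ∞ with ht | ht
        · simp [ht, ENNReal.top_rpow_of_neg (sub_neg.2 hpp₀)]
        rw [← ENNReal.rpow_add _ _ h0 ht, add_sub_cancel]
  calc wLpNormE n p₀ (fun x => V x ^ (p - p₀)) g ≤ (∫⁻ x, V x ^ p) ^ (1 / p₀) :=
        ENNReal.rpow_le_rpow (lintegral_mono hpt) (by positivity)
    _ = lpNormE n p V ^ (p / p₀) := by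
        rw [lpNormE, ← ENNReal.rpow_mul]
        congr 1
        field_simp

lemma lpNormE_le_wLpNormE_mul (hp : 0 < p) (hpp₀ : p < p₀) {F : (Fin n → ℝ) → ℝ≥0∞}
    (hF : Measurable F) (hV : Measurable V) (hV0 : ∀ x, V x ≠ 0) (hVt : ∀ᵐ x, V x ≠ ∞) :
    lpNormE n p F ≤ wLpNormE n p₀ (fun x => V x ^ (p - p₀)) F * lpNormE n p V ^ (1 - p / p₀) := by
  have hp₀ : 0 < p₀ := hp.trans hpp₀
  have hr : p₀ - p ≠ 0 := (sub_pos.2 hpp₀).ne'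
  -- Hölder with exponents `1/p = 1/p₀ + 1/r`, splitting `F = (F V^((p-p₀)/p₀)) V^((p₀-p)/p₀)`
  have hH := ENNReal.lintegral_Lp_mul_le_Lq_mul_Lr hp hpp₀
    (r := p * p₀ / (p₀ - p)) (by field_simp; ring) volume
    (hF.mul (hV.pow_const ((p - p₀) / p₀))).aemeasurable (hV.pow_const ((p₀ - p) / p₀)).aemeasurable
  have hsplit : ∀ᵐ x, ((F * fun x => V x ^ ((p - p₀) / p₀)) * fun x => V x ^ ((p₀ - p) / p₀)) x ^ p
      = F x ^ p := by
    filter_upwards [hVt] with x hx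
    rw [Pi.mul_apply, Pi.mul_apply, mul_assoc, ← ENNReal.rpow_add _ _ (hV0 x) hx, ← add_div,
      add_comm, sub_add_sub_cancel, sub_self, zero_div, ENNReal.rpow_zero, mul_one]
  have hfirst : ∀ x, (F * fun x => V x ^ ((p - p₀) / p₀)) x ^ p₀ = F x ^ p₀ * V x ^ (p - p₀) := by
    intro x
    rw [Pi.mul_apply, ENNReal.mul_rpow_of_nonneg _ _ hp₀.le, ← ENNReal.rpow_mul,
      div_mul_cancel₀ _ hp₀.ne']
  have hsecond : ∀ x, (V x ^ ((p₀ - p) / p₀)) ^ (p * p₀ / (p₀ - p)) = V x ^ p := by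
    intro x
    rw [← ENNReal.rpow_mul]
    congr 1
    field_simp
  rw [lintegral_congr_ae hsplit] at hH
  simp only [hfirst, hsecond] at hH
  refine hH.trans_eq ?_
  rw [wLpNormE, lpNormE, ← ENNReal.rpow_mul]
  congr 2
  field_simp

end ChangeOfWeight

noncomputable def polyDecay (n : ℕ) (x : Fin n → ℝ) : ℝ := (1 + ‖x‖) ^ (-(n + 1 : ℝ))

lemma polyDecay_pos (n : ℕ) (x : Fin n → ℝ) : 0 < polyDecay n x := by
  unfold polyDecay
  positivity

lemma continuous_polyDecay (n : ℕ) : Continuous (polyDecay n) :=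
  (continuous_const.add continuous_norm).rpow_const fun x =>
    Or.inl (by positivity : (0 : ℝ) < 1 + ‖x‖).ne'

lemma lpNormE_ofReal_polyDecay_ne_top {n : ℕ} {p : ℝ} (hp : 1 ≤ p) :
    lpNormE n p (fun x => ENNReal.ofReal (polyDecay n x)) ≠ ∞ := by
  have hp0 : 0 < p := zero_lt_one.trans_le hp
  have hpow : ∀ x, ENNReal.ofReal (polyDecay n x) ^ p
      = ENNReal.ofReal ((1 + ‖x‖) ^ (-((n + 1) * p))) := fun x => by
    rw [polyDecay, ENNReal.ofReal_rpow_of_nonneg (by positivity) hp0.le,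
      ← Real.rpow_mul (by positivity), neg_mul]
  refine ENNReal.rpow_ne_top_of_nonneg (by positivity) ?_
  simp only [hpow]
  refine (finite_integral_one_add_norm (μ := volume) ?_).ne
  rw [Module.finrank_fin_fun]
  nlinarith

lemma ENNReal.le_of_forall_pos_le_add_ofReal_mul {x y R : ℝ≥0∞} (hR : R ≠ ∞)
    (h : ∀ δ : ℝ, 0 < δ → x ≤ y + ENNReal.ofReal δ * R) : x ≤ y := by
  have hlim : Tendsto (fun δ : ℝ => y + ENNReal.ofReal δ * R) (𝓝[>] 0) (𝓝 y) := by
    simpa using (tendsto_const_nhds.add (ENNReal.Tendsto.mul_const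
      (ENNReal.continuous_ofReal.tendsto 0) (Or.inr hR))).mono_left nhdsWithin_le_nhds
  exact ge_of_tendsto hlim (eventually_nhdsWithin_of_forall h)

def WeightedBound (n : ℕ) (𝓑 : Set (Set (Fin n → ℝ))) (p₀ β : ℝ) (c : ℝ≥0∞) : Prop :=
  ∀ w : (Fin n → ℝ) → ℝ≥0∞, IsWeight n w → ApBasisConst n p₀ 𝓑 w < ∞ →
    ∀ f : (Fin n → ℝ) → ℝ, Measurable f → wLpNorm n p₀ w f < ∞ →
      wLpNormE n p₀ w (basisMax n 𝓑 fun y => (‖f y‖₊ : ℝ≥0∞)) ≤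
        c * ApBasisConst n p₀ 𝓑 w ^ β * wLpNorm n p₀ w f

namespace WeightedBound

variable {n : ℕ} {𝓑 : Set (Set (Fin n → ℝ))} {p₀ β : ℝ} {c : ℝ≥0∞}

lemma wLpNormE_basisMax_le (hbound : WeightedBound n 𝓑 p₀ β c) {w : (Fin n → ℝ) → ℝ≥0∞}
    (hw : IsWeight n w) (hwA : ApBasisConst n p₀ 𝓑 w < ∞) {g : (Fin n → ℝ) → ℝ≥0∞}
    (hg : Measurable g) (hgt : ∀ x, g x ≠ ∞) (hgw : wLpNormE n p₀ w g < ∞) :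
    wLpNormE n p₀ w (basisMax n 𝓑 g) ≤ c * ApBasisConst n p₀ 𝓑 w ^ β * wLpNormE n p₀ w g := by
  have hfg : (fun x => (‖(g x).toReal‖₊ : ℝ≥0∞)) = g := funext fun x => by
    rw [← enorm_eq_nnnorm, Real.enorm_of_nonneg ENNReal.toReal_nonneg,
      ENNReal.ofReal_toReal (hgt x)]
  have hf := hbound w hw hwA (fun x => (g x).toReal) hg.ennreal_toReal (by rwa [wLpNorm, hfg])
  rwa [wLpNorm, hfg] at hf

lemma lpNormE_basisMax_le_mul_lpNormE (hbound : WeightedBound n 𝓑 p₀ β c)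
    (hopen : ∀ B ∈ 𝓑, IsOpen B) (hβ : 0 ≤ β) {p : ℝ} (hp : 0 < p) (hpp₀ : p < p₀)
    {g V : (Fin n → ℝ) → ℝ≥0∞} (hg : Measurable g) (hgt : ∀ x, g x ≠ ∞) (hV : Measurable V)
    (hgV : g ≤ V) (hV0 : ∀ x, V x ≠ 0) (hVp : lpNormE n p V ≠ ∞)
    (hw : IsWeight n fun x => V x ^ (p - p₀)) {A : ℝ≥0∞}
    (hA : ApBasisConst n p₀ 𝓑 (fun x => V x ^ (p - p₀)) ≤ A) (hAt : A ≠ ∞) :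
    lpNormE n p (basisMax n 𝓑 g) ≤ c * A ^ β * lpNormE n p V := by
  have hpp₀' : 0 ≤ p / p₀ := (div_pos hp (hp.trans hpp₀)).le
  have hgw := wLpNormE_le_lpNormE_rpow hp hpp₀ hgV
  have hMgw := hbound.wLpNormE_basisMax_le hw (hA.trans_lt hAt.lt_top) hg hgt
    (hgw.trans_lt (ENNReal.rpow_lt_top_of_nonneg hpp₀' hVp))
  calc lpNormE n p (basisMax n 𝓑 g)
      ≤ wLpNormE n p₀ (fun x => V x ^ (p - p₀)) (basisMax n 𝓑 g) * lpNormE n p V ^ (1 - p / p₀) :=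
        lpNormE_le_wLpNormE_mul hp hpp₀ (measurable_basisMax hopen g) hV hV0
          ((ae_lt_top_of_lpNormE_ne_top hp hV hVp).mono fun x hx => hx.ne)
    _ ≤ c * A ^ β * lpNormE n p V ^ (p / p₀) * lpNormE n p V ^ (1 - p / p₀) := by
        gcongr
        exact hMgw.trans (by gcongr)
    _ = c * A ^ β * lpNormE n p V := by
        rw [mul_assoc _ (_ ^ (p / p₀)), ← ENNReal.rpow_add_of_nonneg _ _ hpp₀'
          (sub_nonneg.2 ((div_le_one (hp.trans hpp₀)).2 hpp₀.le)), add_sub_cancel,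
          ENNReal.rpow_one]

lemma lpNormE_basisMax_le (hbound : WeightedBound n 𝓑 p₀ β c) (hopen : ∀ B ∈ 𝓑, IsOpen B)
    (hvol : ∀ B ∈ 𝓑, 0 < volume B ∧ volume B < ∞) (hβ : 0 ≤ β) {p : ℝ} (hp : 1 < p)
    (hpp₀ : p < p₀) (hN : basisMaxOpNorm n 𝓑 p ≠ ∞) {u : (Fin n → ℝ) → ℝ} (hu : Continuous u)
    (hupos : ∀ x, 0 < u x) {g : (Fin n → ℝ) → ℝ≥0∞} (hg : Measurable g) (hgt : ∀ x, g x ≠ ∞)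
    (hgp : lpNormE n p g ≠ ∞) (hug : ∀ x, ENNReal.ofReal (u x) ≤ g x) :
    lpNormE n p (basisMax n 𝓑 g) ≤
      2 * c * (2 * (basisMaxOpNorm n 𝓑 p + 1)) ^ (β * (p₀ - 1)) * lpNormE n p g := by
  set C := 2 * (basisMaxOpNorm n 𝓑 p + 1)
  have hC1 : 1 ≤ C := le_mul_of_one_le_of_le one_le_two le_add_self
  have hC0 : C ≠ 0 := (zero_lt_one.trans_le hC1).ne'
  have hCt : C ≠ ∞ := ENNReal.mul_ne_top ENNReal.ofNat_ne_top (ENNReal.add_ne_top.2 ⟨hN, by simp⟩)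
  set V := rubioDeFrancia n 𝓑 C g
  have hV : Measurable V := measurable_rubioDeFrancia hopen hg C
  have huV : ∀ x, ENNReal.ofReal (u x) ≤ V x := fun x => (hug x).trans (le_rubioDeFrancia C g x)
  have hVp : lpNormE n p V ≤ 2 * lpNormE n p g :=
    lpNormE_rubioDeFrancia_le hopen hp.le hN (mul_le_mul_right le_self_add 2) hg hgp
  have hw : IsWeight n fun x => V x ^ (p - p₀) :=
    (isWeight_ofReal_rpow hu hupos (p - p₀)).mono (hV.pow_const _)
      fun x => ENNReal.rpow_le_rpow_of_nonpos (huV x) (sub_nonpos.2 hpp₀.le)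
  have hA : ApBasisConst n p₀ 𝓑 (fun x => V x ^ (p - p₀)) ≤ C ^ (p₀ - 1) :=
    (apBasisConst_rpow_le hopen hvol hp.le hpp₀ hV hC0 hCt
      (basisMax_rubioDeFrancia_le hopen hg hC0 hCt)).trans
      (ENNReal.rpow_le_rpow_of_exponent_le hC1 (by linarith))
  calc lpNormE n p (basisMax n 𝓑 g) ≤ c * (C ^ (p₀ - 1)) ^ β * lpNormE n p V :=
        hbound.lpNormE_basisMax_le_mul_lpNormE hopen hβ (zero_lt_one.trans hp) hpp₀ hg hgt hV
          (le_rubioDeFrancia C g) (fun x => ((ENNReal.ofReal_pos.2 (hupos x)).trans_le (huV x)).ne')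
          (ne_top_of_le_ne_top (ENNReal.mul_ne_top (by simp) hgp) hVp) hw hA
          (ENNReal.rpow_ne_top_of_nonneg (by linarith) hCt)
    _ ≤ c * C ^ (β * (p₀ - 1)) * (2 * lpNormE n p g) := by
        rw [← ENNReal.rpow_mul, mul_comm (p₀ - 1)]
        gcongr
    _ = 2 * c * C ^ (β * (p₀ - 1)) * lpNormE n p g := by ring

/-- Perturbing `|f|` by `δ * polyDecay` makes the Rubio de Francia weight locally integrable. -/
lemma lpNormE_basisMax_enorm_le (hbound : WeightedBound n 𝓑 p₀ β c)
    (hopen : ∀ B ∈ 𝓑, IsOpen B) (hvol : ∀ B ∈ 𝓑, 0 < volume B ∧ volume B < ∞) (hβ : 0 ≤ β)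
    {p : ℝ} (hp : 1 < p) (hpp₀ : p < p₀) (hN : basisMaxOpNorm n 𝓑 p ≠ ∞)
    {f : (Fin n → ℝ) → ℝ} (hf : Measurable f) (hfp : lpNorm n p f ≠ ∞) {δ : ℝ} (hδ : 0 < δ) :
    lpNormE n p (basisMax n 𝓑 fun y => (‖f y‖₊ : ℝ≥0∞)) ≤
      2 * c * (2 * (basisMaxOpNorm n 𝓑 p + 1)) ^ (β * (p₀ - 1)) *
        (lpNorm n p f +
          ENNReal.ofReal δ * lpNormE n p fun x => ENNReal.ofReal (polyDecay n x)) := by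
  have hu : Continuous fun x => δ * polyDecay n x := continuous_const.mul (continuous_polyDecay n)
  have hupos : ∀ x, 0 < δ * polyDecay n x := fun x => mul_pos hδ (polyDecay_pos n x)
  set g := fun x => (‖f x‖₊ : ℝ≥0∞) + ENNReal.ofReal (δ * polyDecay n x)
  have hf' : Measurable fun x => (‖f x‖₊ : ℝ≥0∞) := hf.nnnorm.coe_nnreal_ennreal
  have hgp : lpNormE n p g ≤
      lpNorm n p f + ENNReal.ofReal δ * lpNormE n p fun x => ENNReal.ofReal (polyDecay n x) := by
    refine (lpNormE_add_le hp.le hf' hu.measurable.ennreal_ofReal).trans ?_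
    simp only [ENNReal.ofReal_mul hδ.le]
    rw [lpNormE_const_mul (zero_lt_one.trans hp) _
      (continuous_polyDecay n).measurable.ennreal_ofReal]
    rfl
  calc lpNormE n p (basisMax n 𝓑 fun y => (‖f y‖₊ : ℝ≥0∞))
      ≤ lpNormE n p (basisMax n 𝓑 g) :=
        lpNormE_mono (zero_lt_one.trans hp).le (basisMax_mono fun x => le_self_add)
    _ ≤ _ := hbound.lpNormE_basisMax_le hopen hvol hβ hp hpp₀ hN hu hupos
          (hf'.add hu.measurable.ennreal_ofReal) (fun x => by simp [g])
          (ne_top_of_le_ne_top (ENNReal.add_ne_top.2 ⟨hfp, ENNReal.mul_ne_top (by simp)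
            (lpNormE_ofReal_polyDecay_ne_top hp.le)⟩) hgp) fun x => le_add_self
    _ ≤ _ := by gcongr

lemma basisMaxOpNorm_le (hbound : WeightedBound n 𝓑 p₀ β c) (hopen : ∀ B ∈ 𝓑, IsOpen B)
    (hvol : ∀ B ∈ 𝓑, 0 < volume B ∧ volume B < ∞) (hβ : 0 ≤ β) (hc : c ≠ ∞) {p : ℝ}
    (hp : 1 < p) (hpp₀ : p < p₀) (hN : basisMaxOpNorm n 𝓑 p ≠ ∞) :
    basisMaxOpNorm n 𝓑 p ≤
      2 * c * (2 * (basisMaxOpNorm n 𝓑 p + 1)) ^ (β * (p₀ - 1)) := by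
  set K := 2 * c * (2 * (basisMaxOpNorm n 𝓑 p + 1)) ^ (β * (p₀ - 1))
  have hK : K ≠ ∞ := ENNReal.mul_ne_top (ENNReal.mul_ne_top (by simp) hc)
    (ENNReal.rpow_ne_top_of_nonneg (mul_nonneg hβ (by linarith))
      (ENNReal.mul_ne_top (by simp) (ENNReal.add_ne_top.2 ⟨hN, by simp⟩)))
  set R := lpNormE n p fun x => ENNReal.ofReal (polyDecay n x)
  have hR : R ≠ ∞ := lpNormE_ofReal_polyDecay_ne_top hp.le
  refine sInf_le fun f hf hfp =>
    ENNReal.le_of_forall_pos_le_add_ofReal_mul (ENNReal.mul_ne_top hK hR) fun δ hδ => ?_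
  calc _ ≤ K * (lpNorm n p f + ENNReal.ofReal δ * R) :=
        hbound.lpNormE_basisMax_enorm_le hopen hvol hβ hp hpp₀ hN hf hfp.ne hδ
    _ = K * lpNorm n p f + ENNReal.ofReal δ * (K * R) := by ring

end WeightedBound

lemma ENNReal.le_rpow_of_le_mul_add_one_rpow {x a : ℝ≥0∞} {θ : ℝ} (hθ0 : 0 ≤ θ) (hθ1 : θ < 1)
    (hx : x ≠ ∞) (h : x ≤ a * (x + 1) ^ θ) : x ≤ (a + 1) ^ (1 - θ)⁻¹ := by
  set y := x + 1
  have hy1 : 1 ≤ y := le_add_self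
  have hy0 : y ≠ 0 := (zero_lt_one.trans_le hy1).ne'
  have hyt : y ≠ ∞ := ENNReal.add_ne_top.2 ⟨hx, ENNReal.one_ne_top⟩
  have hyθ : y ^ θ * y ^ (1 - θ) ≤ y ^ θ * (a + 1) := by
    rw [← ENNReal.rpow_add _ _ hy0 hyt, add_sub_cancel, ENNReal.rpow_one, mul_add, mul_one,
      mul_comm]
    exact add_le_add h (by simpa using ENNReal.rpow_le_rpow hy1 hθ0)
  have hy : y ^ (1 - θ) ≤ a + 1 := (ENNReal.mul_le_mul_iff_right
    (ENNReal.rpow_pos (zero_lt_one.trans_le hy1) hyt).ne'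
    (ENNReal.rpow_ne_top_of_nonneg hθ0 hyt)).1 hyθ
  calc x ≤ y := le_self_add
    _ ≤ (a + 1) ^ (1 - θ)⁻¹ := (ENNReal.le_rpow_inv_iff (sub_pos.2 hθ1)).2 hy

theorem statement17_general (n : ℕ) (𝓑 : Set (Set (Fin n → ℝ)))
    (hopen : ∀ B ∈ 𝓑, IsOpen B)
    (hvol : ∀ B ∈ 𝓑, 0 < volume B ∧ volume B < ∞)
    (hbdd : ∀ p : ℝ, 1 < p → basisMaxOpNorm n 𝓑 p < ∞)
    (hblow : limsup (fun p : ℝ => basisMaxOpNorm n 𝓑 p)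
      (nhdsWithin 1 (Set.Ioi 1)) = (∞ : ℝ≥0∞))
    (p₀ : ℝ) (hp₀ : 1 < p₀) (β : ℝ) (hβ : 0 ≤ β)
    (c : ℝ≥0∞) (hc : c < ∞)
    (hbound : ∀ w : (Fin n → ℝ) → ℝ≥0∞, IsWeight n w → ApBasisConst n p₀ 𝓑 w < ∞ →
      ∀ f : (Fin n → ℝ) → ℝ, Measurable f → wLpNorm n p₀ w f < ∞ →
        wLpNormE n p₀ w (basisMax n 𝓑 fun y => (‖f y‖₊ : ℝ≥0∞)) ≤
          c * ApBasisConst n p₀ 𝓑 w ^ β * wLpNorm n p₀ w f) :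
    1 / (p₀ - 1) ≤ β := by
  by_contra! hβ₀
  set θ := β * (p₀ - 1)
  have hθ1 : θ < 1 := (lt_div_iff₀ (sub_pos.2 hp₀)).1 hβ₀
  have hθ0 : 0 ≤ θ := mul_nonneg hβ (sub_pos.2 hp₀).le
  set K₀ := (2 * c * 2 ^ θ + 1) ^ (1 - θ)⁻¹
  have hK₀ : K₀ ≠ ∞ := ENNReal.rpow_ne_top_of_nonneg (inv_nonneg.2 (sub_pos.2 hθ1).le)
    (ENNReal.add_ne_top.2 ⟨ENNReal.mul_ne_top (ENNReal.mul_ne_top (by simp) hc.ne)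
      (ENNReal.rpow_ne_top_of_nonneg hθ0 (by simp)), by simp⟩)
  have hbdd₀ : ∀ p ∈ Set.Ioo 1 p₀, basisMaxOpNorm n 𝓑 p ≤ K₀ := fun p hp => by
    have hN := WeightedBound.basisMaxOpNorm_le hbound hopen hvol hβ hc.ne hp.1 hp.2 (hbdd p hp.1).ne
    rw [ENNReal.mul_rpow_of_nonneg _ _ hθ0, ← mul_assoc] at hN
    exact ENNReal.le_rpow_of_le_mul_add_one_rpow hθ0 hθ1 (hbdd p hp.1).ne hN
  have hlim : limsup (fun p : ℝ => basisMaxOpNorm n 𝓑 p) (nhdsWithin 1 (Set.Ioi 1)) ≤ K₀ :=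
    limsup_le_of_le (by isBoundedDefault) (eventually_of_mem (Ioo_mem_nhdsGT hp₀) hbdd₀)
  exact hK₀ (top_le_iff.1 (hblow ▸ hlim))

/-- for a basis `𝓑` of open sets whose maximal operator is bounded on
each unweighted `L^p`, `1 < p < ∞`, and blows up as `p → 1⁺`, any weighted bound
`‖M_𝓑 f‖_{L^{p₀}(w)} ≤ c [w]_{A_{p₀,𝓑}}^β ‖f‖_{L^{p₀}(w)}` forces `β ≥ 1/(p₀−1)`. -/
theorem statement17 (n : ℕ) (hn : 1 ≤ n) (𝓑 : Set (Set (Fin n → ℝ)))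
    (hopen : ∀ B ∈ 𝓑, IsOpen B)
    (hvol : ∀ B ∈ 𝓑, 0 < volume B ∧ volume B < ∞)
    (hbdd : ∀ p : ℝ, 1 < p → basisMaxOpNorm n 𝓑 p < ∞)
    (hblow : limsup (fun p : ℝ => basisMaxOpNorm n 𝓑 p)
      (nhdsWithin 1 (Set.Ioi 1)) = (∞ : ℝ≥0∞))
    (p₀ : ℝ) (hp₀ : 1 < p₀) (β : ℝ) (hβ : 0 ≤ β)
    (c : ℝ≥0∞) (hc0 : 0 < c) (hc : c < ∞)
    (hbound : ∀ w : (Fin n → ℝ) → ℝ≥0∞, IsWeight n w → ApBasisConst n p₀ 𝓑 w < ∞ →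
      ∀ f : (Fin n → ℝ) → ℝ, Measurable f → wLpNorm n p₀ w f < ∞ →
        wLpNormE n p₀ w (basisMax n 𝓑 fun y => (‖f y‖₊ : ℝ≥0∞)) ≤
          c * ApBasisConst n p₀ 𝓑 w ^ β * wLpNorm n p₀ w f) :
    1 / (p₀ - 1) ≤ β :=
  statement17_general n 𝓑 hopen hvol hbdd hblow p₀ hp₀ β hβ c hc hbound
end

section
/- Let N be the maximal operator associated to the basis 𝓑₀ = {(0,b) : b > 0} on ℝ, namely Nf(t) = sup_{b>t} b^{−1}∫_0^b |f(x)| dx for t > 0 (and Nf(t) = 0 for t ≤ 0). Let 1 < p₀ < ∞ and β ≥ 0, and suppose there is a constant c > 0 such that for every weight w on ℝ with [w]_{A_{p₀,𝓑₀}} < ∞ and every f with ‖f‖_{L^{p₀}(w)} < ∞, ‖Nf‖_{L^{p₀}(w)} ≤ c [w]_{A_{p₀,𝓑₀}}^β ‖f‖_{L^{p₀}(w)}. Then β ≥ 1/(p₀−1); i.e., the exponent 1/(p−1) in the weighted bound for N over Calderón weights is sharp. -/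
open MeasureTheory Filter
open scoped ENNReal NNReal

/-- The maximal operator `N` associated to the basis `𝓑₀ = {(0,b) : b > 0}` on ℝ:
`Nf(t) = sup_{b > t} b⁻¹ ∫_0^b |f|` for `t > 0`, and `Nf(t) = 0` for `t ≤ 0`. -/
noncomputable def Nop (f : ℝ → ℝ) : ℝ → ℝ≥0∞ :=
  fun t => ⨆ (b : ℝ) (_ : t < b) (_ : 0 < t),
    (ENNReal.ofReal b)⁻¹ * ∫⁻ x in Set.Ioo 0 b, (‖f x‖₊ : ℝ≥0∞)

/-- The `A_{p,𝓑₀}` constant of a weight on ℝ for the Calderón basis `𝓑₀`. -/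
noncomputable def calderonApConst (p : ℝ) (w : ℝ → ℝ≥0∞) : ℝ≥0∞ :=
  ⨆ (b : ℝ) (_ : 0 < b),
    ((ENNReal.ofReal b)⁻¹ * ∫⁻ x in Set.Ioo 0 b, w x) *
      ((ENNReal.ofReal b)⁻¹ * ∫⁻ x in Set.Ioo 0 b, w x ^ (1 - p / (p - 1))) ^ (p - 1)

/-- A weight on ℝ: measurable, nonnegative (`ℝ≥0∞`-valued) and locally integrable. -/
def IsWeightR (w : ℝ → ℝ≥0∞) : Prop :=
  Measurable w ∧ ∀ r : ℝ, 0 < r → (∫⁻ x in Set.Ioo (-r) r, w x) < ∞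

/-- Weighted L^p norm on ℝ of an `ℝ≥0∞`-valued function. -/
noncomputable def wLpNormER (p : ℝ) (w : ℝ → ℝ≥0∞) (g : ℝ → ℝ≥0∞) : ℝ≥0∞ :=
  (∫⁻ x, g x ^ p * w x) ^ (1 / p)

/-- Weighted L^p norm on ℝ of a real function. -/
noncomputable def wLpNormR (p : ℝ) (w : ℝ → ℝ≥0∞) (f : ℝ → ℝ) : ℝ≥0∞ :=
  wLpNormER p w fun x => (‖f x‖₊ : ℝ≥0∞)

/-!
Test the bound on the power weight `w(x) = x^((1-δ)(p-1))` on `(0, ∞)` and on `f(x) = x^(δ-1)`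
on `(0, 1)`. Then `[w]_{A_p} ≤ δ^(1-p)` and `‖f‖_{L^p(w)} = δ^(-1/p)`, while averaging over
`(0, 2t)` gives `Nf(t) ≥ (2t)^(δ-1)/δ` for `t < 1/2`, so `‖Nf‖_{L^p(w)} ≥ δ^(-1-1/p)/2`.
The bound therefore forces `1/2 ≤ c δ^(1+(1-p)β)` for every `δ ∈ (0, 1)`, which fails as
`δ → 0` when `β < 1/(p-1)`.
-/

open Set Topology

namespace Calderon

theorem lintegral_Ioo_ofReal_rpow {s b : ℝ} (hs : -1 < s) (hb : 0 ≤ b) :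
    ∫⁻ x in Ioo 0 b, ENNReal.ofReal (x ^ s) = ENNReal.ofReal (b ^ (s + 1) / (s + 1)) := by
  rw [restrict_Ioo_eq_restrict_Ioc, ← ofReal_integral_eq_lintegral_ofReal,
    ← intervalIntegral.integral_of_le hb, integral_rpow (Or.inl hs),
    Real.zero_rpow (by linarith), sub_zero]
  · exact (intervalIntegral.intervalIntegrable_rpow' hs).1
  · filter_upwards [ae_restrict_mem measurableSet_Ioc] with x hx
    exact Real.rpow_nonneg hx.1.le s

theorem average_Ioo_ofReal_rpow {s b : ℝ} (hs : -1 < s) (hb : 0 < b) :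
    (ENNReal.ofReal b)⁻¹ * ∫⁻ x in Ioo 0 b, ENNReal.ofReal (x ^ s)
      = ENNReal.ofReal (b ^ s / (s + 1)) := by
  rw [lintegral_Ioo_ofReal_rpow hs hb.le, ← ENNReal.ofReal_inv_of_pos hb,
    ← ENNReal.ofReal_mul (by positivity), Real.rpow_add_one hb.ne']
  congr 1
  field_simp

theorem ofReal_rpow_rpow {x : ℝ} (hx : 0 < x) (a b : ℝ) :
    ENNReal.ofReal (x ^ a) ^ b = ENNReal.ofReal (x ^ (a * b)) := by
  rw [ENNReal.ofReal_rpow_of_pos (Real.rpow_pos_of_pos hx a), Real.rpow_mul hx.le]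

noncomputable def powWeight (α : ℝ) : ℝ → ℝ≥0∞ :=
  (Ioi 0).indicator fun x => ENNReal.ofReal (x ^ α)

theorem powWeight_of_pos (α : ℝ) {x : ℝ} (hx : 0 < x) :
    powWeight α x = ENNReal.ofReal (x ^ α) :=
  indicator_of_mem (mem_Ioi.2 hx) _

theorem powWeight_rpow (α r : ℝ) {x : ℝ} (hx : 0 < x) :
    powWeight α x ^ r = powWeight (α * r) x := by
  rw [powWeight_of_pos α hx, powWeight_of_pos _ hx, ofReal_rpow_rpow hx]

theorem setLIntegral_Ioo_powWeight (α b : ℝ) :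
    ∫⁻ x in Ioo 0 b, powWeight α x = ∫⁻ x in Ioo 0 b, ENNReal.ofReal (x ^ α) :=
  setLIntegral_congr_fun measurableSet_Ioo fun _ hx => powWeight_of_pos α hx.1

theorem isWeightR_powWeight {α : ℝ} (hα : -1 < α) : IsWeightR (powWeight α) := by
  refine ⟨(by fun_prop : Measurable fun x : ℝ => ENNReal.ofReal (x ^ α)).indicator
    measurableSet_Ioi, fun r hr => ?_⟩
  have hsupport :
      ∫⁻ x in Ioo (-r) r, powWeight α x = ∫⁻ x in Ioo 0 r, ENNReal.ofReal (x ^ α) := by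
    rw [powWeight, lintegral_indicator measurableSet_Ioi,
      Measure.restrict_restrict measurableSet_Ioi, Ioi_inter_Ioo, max_eq_left (by linarith)]
  rw [hsupport, lintegral_Ioo_ofReal_rpow hα hr.le]
  exact ENNReal.ofReal_lt_top

theorem calderonApConst_powWeight {p α : ℝ} (hp : 1 < p) (hα : -1 < α) (hαp : α < p - 1) :
    calderonApConst p (powWeight α)
      = ENNReal.ofReal (((α + 1) * (1 - α / (p - 1)) ^ (p - 1))⁻¹) := by
  have hp1 : 0 < p - 1 := by linarith
  have hdual : α * (1 - p / (p - 1)) = -(α / (p - 1)) := by field_simp; ring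
  have hγ : 0 < 1 - α / (p - 1) := by rw [sub_pos, div_lt_one hp1]; exact hαp
  have hterm : ∀ b : ℝ, 0 < b →
      ((ENNReal.ofReal b)⁻¹ * ∫⁻ x in Ioo 0 b, powWeight α x) *
        ((ENNReal.ofReal b)⁻¹ * ∫⁻ x in Ioo 0 b, powWeight α x ^ (1 - p / (p - 1))) ^ (p - 1)
      = ENNReal.ofReal (((α + 1) * (1 - α / (p - 1)) ^ (p - 1))⁻¹) := by
    intro b hb
    have hα1 : 0 < α + 1 := by linarith
    rw [setLIntegral_congr_fun measurableSet_Ioo fun x hx => powWeight_rpow α _ hx.1, hdual,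
      setLIntegral_Ioo_powWeight, setLIntegral_Ioo_powWeight, average_Ioo_ofReal_rpow hα hb,
      average_Ioo_ofReal_rpow (by linarith) hb, neg_add_eq_sub,
      ENNReal.ofReal_rpow_of_pos (div_pos (Real.rpow_pos_of_pos hb _) hγ),
      ← ENNReal.ofReal_mul (div_pos (Real.rpow_pos_of_pos hb _) hα1).le,
      Real.div_rpow (Real.rpow_nonneg hb.le _) hγ.le, ← Real.rpow_mul hb.le,
      show -(α / (p - 1)) * (p - 1) = -α by field_simp, Real.rpow_neg hb.le]
    congr 1
    field_simp
  exact le_antisymm (iSup₂_le fun b hb => (hterm b hb).le)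
    (le_iSup₂_of_le 1 one_pos (hterm 1 one_pos).ge)

noncomputable def powTest (s : ℝ) : ℝ → ℝ := (Ioo 0 1).indicator fun x => x ^ s

theorem measurable_powTest (s : ℝ) : Measurable (powTest s) :=
  (by fun_prop : Measurable fun x : ℝ => x ^ s).indicator measurableSet_Ioo

theorem nnnorm_powTest_of_mem {s x : ℝ} (hx : x ∈ Ioo 0 1) :
    (‖powTest s x‖₊ : ℝ≥0∞) = ENNReal.ofReal (x ^ s) := by
  rw [powTest, indicator_of_mem hx, ← enorm_eq_nnnorm,
    Real.enorm_eq_ofReal (Real.rpow_nonneg hx.1.le s)]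

theorem lintegral_powTest_rpow_mul_powWeight {p s α : ℝ} (hp : 0 < p) (h : -1 < s * p + α) :
    ∫⁻ x, (‖powTest s x‖₊ : ℝ≥0∞) ^ p * powWeight α x
      = ENNReal.ofReal (1 / (s * p + α + 1)) := by
  have hintegrand : (fun x => (‖powTest s x‖₊ : ℝ≥0∞) ^ p * powWeight α x)
      = (Ioo 0 1).indicator fun x => ENNReal.ofReal (x ^ (s * p + α)) := by
    ext x
    by_cases hx : x ∈ Ioo 0 1
    · rw [indicator_of_mem hx, nnnorm_powTest_of_mem hx, powWeight_of_pos α hx.1,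
        ofReal_rpow_rpow hx.1, ← ENNReal.ofReal_mul (Real.rpow_nonneg hx.1.le _),
        ← Real.rpow_add hx.1]
    · rw [indicator_of_notMem hx, powTest, indicator_of_notMem hx, nnnorm_zero, ENNReal.coe_zero,
        ENNReal.zero_rpow_of_pos hp, zero_mul]
  rw [hintegrand, lintegral_indicator measurableSet_Ioo, lintegral_Ioo_ofReal_rpow h zero_le_one,
    Real.one_rpow]

theorem le_Nop (f : ℝ → ℝ) {t b : ℝ} (ht : 0 < t) (htb : t < b) :
    (ENNReal.ofReal b)⁻¹ * ∫⁻ x in Ioo 0 b, (‖f x‖₊ : ℝ≥0∞) ≤ Nop f t :=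
  le_iSup_of_le b (le_iSup_of_le htb (le_iSup_of_le ht le_rfl))

theorem ofReal_le_Nop_powTest {s t : ℝ} (hs : -1 < s) (ht : 0 < t) (ht1 : 2 * t ≤ 1) :
    ENNReal.ofReal ((2 * t) ^ s / (s + 1)) ≤ Nop (powTest s) t := by
  have h2t : 0 < 2 * t := by linarith
  rw [← average_Ioo_ofReal_rpow hs h2t, ← setLIntegral_congr_fun measurableSet_Ioo
    fun x hx => nnnorm_powTest_of_mem ⟨hx.1, hx.2.trans_le ht1⟩]
  exact le_Nop _ ht (by linarith)

theorem ofReal_le_lintegral_Nop_powTest_rpow_mul_powWeight {p s α : ℝ} (hp : 0 < p)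
    (hs : -1 < s) (h : -1 < s * p + α) :
    ENNReal.ofReal (2 ^ (-(α + 1)) / ((s + 1) ^ p * (s * p + α + 1)))
      ≤ ∫⁻ t, Nop (powTest s) t ^ p * powWeight α t := by
  have hs1 : 0 < s + 1 := by linarith
  have hpointwise : ∀ t ∈ Ioo (0 : ℝ) (1 / 2),
      ENNReal.ofReal (2 ^ (s * p) / (s + 1) ^ p) * ENNReal.ofReal (t ^ (s * p + α))
        ≤ Nop (powTest s) t ^ p * powWeight α t := by
    intro t ⟨ht0, ht⟩
    have hbase : 0 < (2 * t) ^ s / (s + 1) := div_pos (Real.rpow_pos_of_pos (by positivity) s) hs1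
    have hsplit : 2 ^ (s * p) / (s + 1) ^ p * t ^ (s * p + α)
        = ((2 * t) ^ s / (s + 1)) ^ p * t ^ α := by
      rw [Real.div_rpow (Real.rpow_nonneg (by positivity) s) hs1.le,
        ← Real.rpow_mul (by positivity),
        Real.mul_rpow (by norm_num) ht0.le, Real.rpow_add ht0]
      ring
    rw [← ENNReal.ofReal_mul (div_nonneg (by positivity) (Real.rpow_nonneg hs1.le p)), hsplit,
      ENNReal.ofReal_mul (Real.rpow_nonneg hbase.le p), ← ENNReal.ofReal_rpow_of_pos hbase,
      powWeight_of_pos α ht0]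
    gcongr
    exact ofReal_le_Nop_powTest hs ht0 (by linarith)
  calc ENNReal.ofReal (2 ^ (-(α + 1)) / ((s + 1) ^ p * (s * p + α + 1)))
      = ∫⁻ t in Ioo 0 (1 / 2),
          ENNReal.ofReal (2 ^ (s * p) / (s + 1) ^ p) * ENNReal.ofReal (t ^ (s * p + α)) := by
        rw [lintegral_const_mul' _ _ ENNReal.ofReal_ne_top,
          lintegral_Ioo_ofReal_rpow h (by norm_num), ← ENNReal.ofReal_mul (by positivity)]
        congr 1
        have hpow : (2 : ℝ) ^ (s * p) * (1 / 2) ^ (s * p + α + 1) = 2 ^ (-(α + 1)) := by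
          rw [one_div, Real.inv_rpow (by norm_num), ← Real.rpow_neg (by norm_num),
            ← Real.rpow_add (by norm_num)]
          ring_nf
        rw [div_mul_div_comm, hpow]
    _ ≤ ∫⁻ t in Ioo 0 (1 / 2), Nop (powTest s) t ^ p * powWeight α t :=
        setLIntegral_mono' measurableSet_Ioo hpointwise
    _ ≤ ∫⁻ t, Nop (powTest s) t ^ p * powWeight α t := setLIntegral_le_lintegral _ _

theorem nonpos_of_forall_mul_rpow_le {a C x y : ℝ} (hxy : x < y)
    (h : ∀ δ ∈ Ioo (0 : ℝ) 1, a * δ ^ x ≤ C * δ ^ y) : a ≤ 0 := by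
  have hlim : Tendsto (fun δ : ℝ => C * δ ^ (y - x)) (𝓝[>] 0) (𝓝 0) := by
    have := ((Real.continuous_rpow_const (sub_pos.2 hxy).le).tendsto 0).const_mul C
    rw [Real.zero_rpow (sub_pos.2 hxy).ne', mul_zero] at this
    exact this.mono_left nhdsWithin_le_nhds
  refine ge_of_tendsto hlim ?_
  filter_upwards [Ioo_mem_nhdsGT one_pos] with δ hδ
  have hδx := Real.rpow_pos_of_pos hδ.1 x
  rw [Real.rpow_sub hδ.1, ← mul_div_assoc, le_div_iff₀ hδx]
  exact h δ hδ

theorem calderonApConst_powWeight_le {p δ : ℝ} (hp : 1 < p) (hδ : δ ∈ Ioo 0 1) :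
    calderonApConst p (powWeight ((1 - δ) * (p - 1))) ≤ ENNReal.ofReal (δ ^ (1 - p)) := by
  obtain ⟨hδ0, hδ1⟩ := hδ
  have hp1 : 0 < p - 1 := by linarith
  have hα0 : 0 ≤ (1 - δ) * (p - 1) := mul_nonneg (by linarith) hp1.le
  rw [calderonApConst_powWeight hp (by linarith) (by nlinarith),
    show 1 - (1 - δ) * (p - 1) / (p - 1) = δ by field_simp; ring,
    show 1 - p = -(p - 1) by ring, Real.rpow_neg hδ0.le]
  gcongr
  exact le_mul_of_one_le_left (Real.rpow_nonneg hδ0.le _) (by linarith)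

theorem wLpNormR_powTest {p δ : ℝ} (hp : 0 < p) (hδ : 0 < δ) :
    wLpNormR p (powWeight ((1 - δ) * (p - 1))) (powTest (δ - 1))
      = ENNReal.ofReal (δ ^ (-1 / p)) := by
  rw [wLpNormR, wLpNormER, lintegral_powTest_rpow_mul_powWeight hp (by linarith),
    show (δ - 1) * p + (1 - δ) * (p - 1) + 1 = δ by ring, one_div δ, ← Real.rpow_neg_one,
    ofReal_rpow_rpow hδ, mul_one_div]

theorem ofReal_le_wLpNormER_Nop_powTest {p δ : ℝ} (hp : 1 ≤ p) (hδ : 0 < δ) :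
    ENNReal.ofReal (1 / 2 * δ ^ (-(p + 1) / p))
      ≤ wLpNormER p (powWeight ((1 - δ) * (p - 1))) (Nop (powTest (δ - 1))) := by
  set α := (1 - δ) * (p - 1)
  have hlower := ofReal_le_lintegral_Nop_powTest_rpow_mul_powWeight (by linarith) (by linarith)
    (by linarith : -1 < (δ - 1) * p + α)
  rw [show (δ - 1) * p + α + 1 = δ by ring, sub_add_cancel] at hlower
  refine le_trans ?_ (ENNReal.rpow_le_rpow hlower (by positivity : 0 ≤ 1 / p))
  have hsplit : (2 ^ (-(α + 1)) / (δ ^ p * δ)) ^ (1 / p)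
      = 2 ^ (-(α + 1) / p) * δ ^ (-(p + 1) / p) := by
    rw [← Real.rpow_add_one hδ.ne', Real.div_rpow (by positivity) (by positivity),
      ← Real.rpow_mul (by norm_num), ← Real.rpow_mul hδ.le, div_eq_mul_inv _ (δ ^ _),
      ← Real.rpow_neg hδ.le]
    ring_nf
  rw [ENNReal.ofReal_rpow_of_pos (by positivity), hsplit]
  gcongr
  rw [one_div, ← Real.rpow_neg_one]
  gcongr
  · norm_num
  · rw [neg_div, neg_le_neg_iff, div_le_one (by linarith)]
    nlinarith

def NopWeightedBound (p β : ℝ) (c : ℝ≥0∞) : Prop :=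
  ∀ w : ℝ → ℝ≥0∞, IsWeightR w → calderonApConst p w < ∞ →
    ∀ f : ℝ → ℝ, Measurable f → wLpNormR p w f < ∞ →
      wLpNormER p w (Nop f) ≤ c * calderonApConst p w ^ β * wLpNormR p w f

theorem NopWeightedBound.half_mul_rpow_le {p β : ℝ} {c : ℝ≥0∞} (hN : NopWeightedBound p β c)
    (hp : 1 < p) (hβ : 0 ≤ β) (hc : c ≠ ∞) {δ : ℝ} (hδ : δ ∈ Ioo 0 1) :
    1 / 2 * δ ^ (-(p + 1) / p) ≤ c.toReal * δ ^ ((1 - p) * β - 1 / p) := by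
  have hδ0 : 0 < δ := hδ.1
  have hAp := calderonApConst_powWeight_le hp hδ
  have hf := wLpNormR_powTest (p := p) (by linarith) hδ0
  have hbound := hN _ (isWeightR_powWeight (by nlinarith [hδ.2]))
    (hAp.trans_lt ENNReal.ofReal_lt_top) _ (measurable_powTest _) (hf ▸ ENNReal.ofReal_lt_top)
  have hchain : ENNReal.ofReal (1 / 2 * δ ^ (-(p + 1) / p))
      ≤ c * ENNReal.ofReal (δ ^ (1 - p)) ^ β * ENNReal.ofReal (δ ^ (-1 / p)) :=
    (ofReal_le_wLpNormER_Nop_powTest hp.le hδ0).trans (hbound.trans (by rw [hf]; gcongr))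
  rw [ofReal_rpow_rpow hδ0, ← ENNReal.ofReal_toReal hc,
    ← ENNReal.ofReal_mul ENNReal.toReal_nonneg, ← ENNReal.ofReal_mul (by positivity),
    ENNReal.ofReal_le_ofReal_iff (by positivity), mul_assoc, ← Real.rpow_add hδ0] at hchain
  rwa [sub_eq_add_neg, ← neg_div]

end Calderon

theorem statement18_general (p₀ : ℝ) (hp₀ : 1 < p₀) (β : ℝ) (hβ : 0 ≤ β)
    (c : ℝ≥0∞) (hc : c < ∞)
    (hbound : ∀ w : ℝ → ℝ≥0∞, IsWeightR w → calderonApConst p₀ w < ∞ →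
      ∀ f : ℝ → ℝ, Measurable f → wLpNormR p₀ w f < ∞ →
        wLpNormER p₀ w (Nop f) ≤ c * calderonApConst p₀ w ^ β * wLpNormR p₀ w f) :
    1 / (p₀ - 1) ≤ β := by
  by_contra! hβ_small
  have hp0 : 0 < p₀ := by linarith
  have hexp : -(p₀ + 1) / p₀ < (1 - p₀) * β - 1 / p₀ := by
    have : β * (p₀ - 1) < 1 := (lt_div_iff₀ (by linarith)).1 hβ_small
    rw [neg_div, add_div, div_self hp0.ne']
    linarith
  have hhalf : (1 / 2 : ℝ) ≤ 0 := Calderon.nonpos_of_forall_mul_rpow_le hexp fun δ hδ =>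
    Calderon.NopWeightedBound.half_mul_rpow_le hbound hp₀ hβ hc.ne hδ
  norm_num at hhalf

/-- sharpness of the exponent `1/(p−1)` for the maximal operator `N`
over Calderón weights: if `‖Nf‖_{L^{p₀}(w)} ≤ c [w]_{A_{p₀,𝓑₀}}^β ‖f‖_{L^{p₀}(w)}`
for every weight `w` on ℝ with `[w]_{A_{p₀,𝓑₀}} < ∞`, then `β ≥ 1/(p₀−1)`. -/
theorem statement18 (p₀ : ℝ) (hp₀ : 1 < p₀) (β : ℝ) (hβ : 0 ≤ β)
    (c : ℝ≥0∞) (hc0 : 0 < c) (hc : c < ∞)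
    (hbound : ∀ w : ℝ → ℝ≥0∞, IsWeightR w → calderonApConst p₀ w < ∞ →
      ∀ f : ℝ → ℝ, Measurable f → wLpNormR p₀ w f < ∞ →
        wLpNormER p₀ w (Nop f) ≤ c * calderonApConst p₀ w ^ β * wLpNormR p₀ w f) :
    1 / (p₀ - 1) ≤ β :=
  statement18_general p₀ hp₀ β hβ c hc hbound
end
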